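/- arXiv:1302.1810 — 8 statements merged into one kernel-verified Lean document; each statement's English description precedes it below -/
import Mathlib

section
/- There exists T̄ > 0 such that for every t ∈ ℂ with |t| < T̄, the matrix-valued boundary value problem q̈(s) = t·E(ts)·q̇(s) + t²·F(ts)·q(s) for s ∈ [0,1], with boundary conditions q(0) = 0 and q(1) = 𝟙, admits a unique C² solution q̃♭_t : [0,1] → M_ν(ℂ); likewise the same ODE with boundary conditions q(0) = 𝟙 and q(1) = 0 admits a unique C² solution q̃♯_t. -/
/-!
Put `e s = t E(ts)` and `f s = t² F(ts)`. With `g = q''`, the boundary conditions determine `q`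
through the Dirichlet Green function of `d²/ds²` on `[0,1]`:
`q s = a + s (b - a) + ∫₀¹ G(s,σ) g σ dσ`. Both this Green potential and its derivative are
bounded by `sup ‖g‖`, so the equation `g = e q' + f q` is a fixed-point problem for a map on
`C([0,1])` that is a contraction as soon as `‖e‖ + ‖f‖ < 1`, which holds for small `|t|` since
`E` and `F` are continuous near `0`. Banach's fixed point theorem gives existence and uniqueness.
-/

open Matrix Set MeasureTheory Filter

attribute [local instance] Matrix.linftyOpNormedAddCommGroup Matrix.linftyOpNormedRing
  Matrix.linftyOpNormedAlgebra

noncomputable section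

abbrev Mat (ν : ℕ) := Matrix (Fin ν) (Fin ν) ℂ

/-- `E(t) := Ȧ(t)A(t)⁻¹ + 2A(t)(ᵗB(t) − B(t))`. -/
def Ecoef {ν : ℕ} (A B : ℂ → Mat ν) (t : ℂ) : Mat ν :=
  deriv A t * (A t)⁻¹ + (2 : ℂ) • (A t * ((B t)ᵀ - B t))

/-- `F(t) := 4A(t)C(t) − 2A(t)Ḃ(t)`. -/
def Fcoef {ν : ℕ} (A B C : ℂ → Mat ν) (t : ℂ) : Mat ν :=
  (4 : ℂ) • (A t * C t) - (2 : ℂ) • (A t * deriv B t)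

/-- `q : [0,1] → Mat ν` is a C² solution of the rescaled matrix ODE
`q̈(s) = t·E(ts)·q̇(s) + t²·F(ts)·q(s)` with boundary values `q 0 = a`, `q 1 = b`. -/
def SolBVP {ν : ℕ} (A B C : ℂ → Mat ν) (t : ℂ) (a b : Mat ν) (q : ℝ → Mat ν) : Prop :=
  ContDiffOn ℝ 2 q (Icc 0 1) ∧
  (∀ s ∈ Icc (0 : ℝ) 1,
      derivWithin (derivWithin q (Icc 0 1)) (Icc 0 1) s =
        t • (Ecoef A B (t * s) * derivWithin q (Icc 0 1) s)
          + t ^ 2 • (Fcoef A B C (t * s) * q s)) ∧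
  q 0 = a ∧ q 1 = b

open Topology

section Green

variable {E : Type*} [NormedAddCommGroup E] [NormedSpace ℝ E] {g g' : ℝ → E}

/-- The Dirichlet Green kernel of `d²/ds²` on `[0,1]` is `(s - 1) σ` for `σ ≤ s` and `s (σ - 1)`
for `σ ≥ s`. -/
def greenPotential (g : ℝ → E) (s : ℝ) : E :=
  (s - 1) • (∫ σ in (0 : ℝ)..s, σ • g σ) + s • ∫ σ in s..1, (σ - 1) • g σ

def greenPotentialDeriv (g : ℝ → E) (s : ℝ) : E :=
  (∫ σ in (0 : ℝ)..s, σ • g σ) + ∫ σ in s..1, (σ - 1) • g σ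

def greenSolution (g : ℝ → E) (a b : E) (s : ℝ) : E :=
  a + s • (b - a) + greenPotential g s

@[simp] theorem greenPotential_zero : greenPotential g 0 = 0 := by
  simp [greenPotential]

@[simp] theorem greenPotential_one : greenPotential g 1 = 0 := by
  simp [greenPotential]

theorem integral_smul_sub {φ : ℝ → ℝ} (hφ : Continuous φ) (hg : Continuous g)
    (hg' : Continuous g') (u v : ℝ) :
    ∫ σ in u..v, φ σ • (g - g') σ = (∫ σ in u..v, φ σ • g σ) - ∫ σ in u..v, φ σ • g' σ := by
  simp only [Pi.sub_apply, smul_sub]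
  exact intervalIntegral.integral_sub ((hφ.smul hg).intervalIntegrable _ _)
    ((hφ.smul hg').intervalIntegrable _ _)

theorem greenPotential_sub (hg : Continuous g) (hg' : Continuous g') :
    greenPotential (g - g') = greenPotential g - greenPotential g' := by
  ext s
  rw [greenPotential, integral_smul_sub (φ := fun σ => σ) (by fun_prop) hg hg',
    integral_smul_sub (φ := fun σ => σ - 1) (by fun_prop) hg hg']
  simp only [greenPotential, Pi.sub_apply]
  module

theorem greenPotentialDeriv_sub (hg : Continuous g) (hg' : Continuous g') :
    greenPotentialDeriv (g - g') = greenPotentialDeriv g - greenPotentialDeriv g' := by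
  ext s
  rw [greenPotentialDeriv, integral_smul_sub (φ := fun σ => σ) (by fun_prop) hg hg',
    integral_smul_sub (φ := fun σ => σ - 1) (by fun_prop) hg hg']
  simp only [greenPotentialDeriv, Pi.sub_apply]
  abel

theorem norm_integral_smul_le {φ : ℝ → ℝ} {a b C : ℝ} (hab : a ≤ b)
    (hφ : ∀ σ ∈ Ioc a b, |φ σ| ≤ 1) (hg : ∀ σ ∈ Ioc a b, ‖g σ‖ ≤ C) :
    ‖∫ σ in a..b, φ σ • g σ‖ ≤ C * (b - a) := by
  have h := intervalIntegral.norm_integral_le_of_norm_le_const (f := fun σ => φ σ • g σ)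
    (C := C) (a := a) (b := b) fun σ hσ => by
      rw [uIoc_of_le hab] at hσ
      rw [norm_smul, Real.norm_eq_abs]
      exact (mul_le_of_le_one_left (norm_nonneg _) (hφ σ hσ)).trans (hg σ hσ)
  rwa [abs_of_nonneg (sub_nonneg.2 hab)] at h

theorem norm_integral_id_smul_le {C s : ℝ} (hC : ∀ σ ∈ Icc (0 : ℝ) 1, ‖g σ‖ ≤ C)
    (hs : s ∈ Icc (0 : ℝ) 1) : ‖∫ σ in (0 : ℝ)..s, σ • g σ‖ ≤ C * s := by
  simpa using norm_integral_smul_le hs.1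
    (fun σ hσ => abs_le.2 ⟨by linarith [hσ.1], hσ.2.trans hs.2⟩)
    (fun σ hσ => hC σ ⟨hσ.1.le, hσ.2.trans hs.2⟩)

theorem norm_integral_sub_one_smul_le {C s : ℝ} (hC : ∀ σ ∈ Icc (0 : ℝ) 1, ‖g σ‖ ≤ C)
    (hs : s ∈ Icc (0 : ℝ) 1) : ‖∫ σ in s..1, (σ - 1) • g σ‖ ≤ C * (1 - s) :=
  norm_integral_smul_le hs.2
    (fun σ hσ => abs_le.2 ⟨by linarith [hσ.1, hs.1], by linarith [hσ.2]⟩)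
    (fun σ hσ => hC σ ⟨hs.1.trans hσ.1.le, hσ.2⟩)

theorem norm_greenPotentialDeriv_le {C s : ℝ} (hC : ∀ σ ∈ Icc (0 : ℝ) 1, ‖g σ‖ ≤ C)
    (hs : s ∈ Icc (0 : ℝ) 1) : ‖greenPotentialDeriv g s‖ ≤ C := by
  calc ‖greenPotentialDeriv g s‖ ≤ C * s + C * (1 - s) :=
        norm_add_le_of_le (norm_integral_id_smul_le hC hs) (norm_integral_sub_one_smul_le hC hs)
    _ = C := by ring

theorem norm_greenPotential_le {C s : ℝ} (hC : ∀ σ ∈ Icc (0 : ℝ) 1, ‖g σ‖ ≤ C)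
    (hs : s ∈ Icc (0 : ℝ) 1) : ‖greenPotential g s‖ ≤ C := by
  have hC0 : 0 ≤ C := (norm_nonneg _).trans (hC 0 ⟨le_rfl, zero_le_one⟩)
  calc ‖greenPotential g s‖ ≤ (1 - s) * (C * s) + s * (C * (1 - s)) := by
        refine norm_add_le_of_le ?_ ?_ <;> rw [norm_smul, Real.norm_eq_abs]
        · rw [abs_of_nonpos (by linarith [hs.2]), neg_sub]
          exact mul_le_mul_of_nonneg_left (norm_integral_id_smul_le hC hs) (by linarith [hs.2])
        · rw [abs_of_nonneg hs.1]
          exact mul_le_mul_of_nonneg_left (norm_integral_sub_one_smul_le hC hs) hs.1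
    _ ≤ C := by nlinarith [mul_nonneg hC0 (sq_nonneg (2 * s - 1))]

theorem Icc_mem_nhdsGE_of_mem_Ico {a b x : ℝ} (hx : x ∈ Ico a b) : Icc a b ∈ 𝓝[≥] x :=
  mem_of_superset (Icc_mem_nhdsGE hx.2) (Icc_subset_Icc_left hx.1)

theorem eqOn_zero_of_hasDerivWithinAt_zero {d d' : ℝ → E}
    (hd : ∀ x ∈ Icc (0 : ℝ) 1, HasDerivWithinAt d (d' x) (Icc 0 1) x)
    (hd' : ∀ x ∈ Icc (0 : ℝ) 1, HasDerivWithinAt d' 0 (Icc 0 1) x)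
    (h0 : d 0 = 0) (h1 : d 1 = 0) : EqOn d 0 (Icc 0 1) := by
  have hIcc {x : ℝ} (hx : x ∈ Ico (0 : ℝ) 1) : x ∈ Icc (0 : ℝ) 1 := Ico_subset_Icc_self hx
  have hd'_const : ∀ x ∈ Icc (0 : ℝ) 1, d' x = d' 0 :=
    constant_of_has_deriv_right_zero (fun x hx => (hd' x hx).continuousWithinAt)
      fun x hx => (hd' x (hIcc hx)).mono_of_mem_nhdsWithin (Icc_mem_nhdsGE_of_mem_Ico hx)
  have hd_linear : ∀ x ∈ Icc (0 : ℝ) 1, d x = x • d' 0 := by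
    refine eq_of_has_deriv_right_eq (f' := fun _ => d' 0) (fun x hx => ?_)
      (fun x _ => ((hasDerivAt_id x).smul_const (d' 0)).hasDerivWithinAt.congr_deriv (one_smul _ _))
      (fun x hx => (hd x hx).continuousWithinAt) (by fun_prop) (by simp [h0])
    rw [← hd'_const x (hIcc hx)]
    exact (hd x (hIcc hx)).mono_of_mem_nhdsWithin (Icc_mem_nhdsGE_of_mem_Ico hx)
  have hslope : d' 0 = 0 := by simpa [h1] using (hd_linear 1 ⟨zero_le_one, le_rfl⟩).symm
  intro x hx
  simp [hd_linear x hx, hslope]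

variable [CompleteSpace E]

theorem hasDerivAt_integral_id_smul (hg : Continuous g) (s : ℝ) :
    HasDerivAt (fun u => ∫ σ in (0 : ℝ)..u, σ • g σ) (s • g s) s :=
  (Continuous.integral_hasStrictDerivAt (by fun_prop) 0 s).hasDerivAt

theorem hasDerivAt_integral_sub_one_smul (hg : Continuous g) (s : ℝ) :
    HasDerivAt (fun u => ∫ σ in u..1, (σ - 1) • g σ) (-((s - 1) • g s)) s := by
  have hφg : Continuous fun σ : ℝ => (σ - 1) • g σ := by fun_prop
  exact intervalIntegral.integral_hasDerivAt_left (hφg.intervalIntegrable _ _)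
    hφg.aestronglyMeasurable.stronglyMeasurableAtFilter hφg.continuousAt

theorem hasDerivAt_greenPotential (hg : Continuous g) (s : ℝ) :
    HasDerivAt (greenPotential g) (greenPotentialDeriv g s) s := by
  refine ((((hasDerivAt_id s).sub_const 1).smul (hasDerivAt_integral_id_smul hg s)).add
    ((hasDerivAt_id s).smul (hasDerivAt_integral_sub_one_smul hg s))).congr_deriv ?_
  simp only [greenPotentialDeriv, id]
  module

theorem hasDerivAt_greenPotentialDeriv (hg : Continuous g) (s : ℝ) :
    HasDerivAt (greenPotentialDeriv g) (g s) s :=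
  ((hasDerivAt_integral_id_smul hg s).add (hasDerivAt_integral_sub_one_smul hg s)).congr_deriv
    (by module)

theorem continuous_greenPotentialDeriv (hg : Continuous g) : Continuous (greenPotentialDeriv g) :=
  continuous_iff_continuousAt.2 fun s => (hasDerivAt_greenPotentialDeriv hg s).continuousAt

theorem hasDerivAt_greenSolution (hg : Continuous g) (a b : E) (s : ℝ) :
    HasDerivAt (greenSolution g a b) (b - a + greenPotentialDeriv g s) s :=
  ((((hasDerivAt_id s).smul_const (b - a)).const_add a).add
    (hasDerivAt_greenPotential hg s)).congr_deriv (by simp)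

theorem derivWithin_greenSolution (hg : Continuous g) (a b : E) {s : ℝ}
    (hs : s ∈ Icc (0 : ℝ) 1) :
    derivWithin (greenSolution g a b) (Icc 0 1) s = b - a + greenPotentialDeriv g s :=
  (hasDerivAt_greenSolution hg a b s).hasDerivWithinAt.derivWithin
    (uniqueDiffOn_Icc zero_lt_one s hs)

theorem derivWithin_derivWithin_greenSolution (hg : Continuous g) (a b : E) {s : ℝ}
    (hs : s ∈ Icc (0 : ℝ) 1) :
    derivWithin (derivWithin (greenSolution g a b) (Icc 0 1)) (Icc 0 1) s = g s := by
  rw [derivWithin_congr (fun x hx => derivWithin_greenSolution hg a b hx)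
    (derivWithin_greenSolution hg a b hs)]
  exact ((hasDerivAt_greenPotentialDeriv hg s).const_add (b - a)).hasDerivWithinAt.derivWithin
    (uniqueDiffOn_Icc zero_lt_one s hs)

theorem contDiff_greenSolution (hg : Continuous g) (a b : E) :
    ContDiff ℝ 2 (greenSolution g a b) := by
  have hderiv : deriv (greenSolution g a b) = fun s => b - a + greenPotentialDeriv g s :=
    funext fun s => (hasDerivAt_greenSolution hg a b s).deriv
  rw [show (2 : WithTop ℕ∞) = 1 + 1 from rfl, contDiff_succ_iff_deriv, hderiv,
    contDiff_one_iff_deriv]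
  refine ⟨fun s => (hasDerivAt_greenSolution hg a b s).differentiableAt, by simp,
    fun s => ((hasDerivAt_greenPotentialDeriv hg s).const_add _).differentiableAt, ?_⟩
  rwa [funext fun s => ((hasDerivAt_greenPotentialDeriv hg s).const_add (b - a)).deriv]

theorem eqOn_greenSolution {p : ℝ → E} (hp : ContDiffOn ℝ 2 p (Icc 0 1)) (hg : Continuous g)
    (hpg : ∀ s ∈ Icc (0 : ℝ) 1, derivWithin (derivWithin p (Icc 0 1)) (Icc 0 1) s = g s) :
    EqOn p (greenSolution g (p 0) (p 1)) (Icc 0 1) := by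
  have hp' : ContDiffOn ℝ 1 (derivWithin p (Icc 0 1)) (Icc 0 1) :=
    hp.derivWithin (uniqueDiffOn_Icc zero_lt_one) (by norm_num)
  intro s hs
  refine sub_eq_zero.1 (eqOn_zero_of_hasDerivWithinAt_zero (d := p - greenSolution g (p 0) (p 1))
    (d' := derivWithin p (Icc 0 1) - fun x => p 1 - p 0 + greenPotentialDeriv g x)
    (fun x hx => ?_) (fun x hx => ?_) (by simp [greenSolution]) (by simp [greenSolution]) hs)
  · exact (hp.differentiableOn (by norm_num) x hx).hasDerivWithinAt.sub
      (hasDerivAt_greenSolution hg _ _ x).hasDerivWithinAt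
  · have h := (hp'.differentiableOn one_ne_zero x hx).hasDerivWithinAt.sub
      ((hasDerivAt_greenPotentialDeriv hg x).const_add (p 1 - p 0)).hasDerivWithinAt
    rwa [hpg x hx, sub_self] at h

end Green

section LinearBVP

variable {R : Type*} [NormedRing R] [NormedAlgebra ℝ R]

def IsBVPSolution (e f : ℝ → R) (a b : R) (q : ℝ → R) : Prop :=
  ContDiffOn ℝ 2 q (Icc 0 1) ∧
  (∀ s ∈ Icc (0 : ℝ) 1, derivWithin (derivWithin q (Icc 0 1)) (Icc 0 1) s =
      e s * derivWithin q (Icc 0 1) s + f s * q s) ∧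
  q 0 = a ∧ q 1 = b

theorem continuous_IccExtend_zero_one {X : Type*} [TopologicalSpace X]
    (h : C(Icc (0 : ℝ) 1, X)) : Continuous (IccExtend zero_le_one h) :=
  continuous_IccExtend_iff.2 h.continuous

variable [CompleteSpace R] {e f : ℝ → R}

/-- The solutions of the boundary value problem are the `greenSolution`s of the fixed points of
this map, a fixed point being the second derivative of the solution. -/
def bvpMap (he : ContinuousOn e (Icc 0 1)) (hf : ContinuousOn f (Icc 0 1)) (a b : R)
    (h : C(Icc (0 : ℝ) 1, R)) : C(Icc (0 : ℝ) 1, R) where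
  toFun s := e s * (b - a + greenPotentialDeriv (IccExtend zero_le_one h) s)
    + f s * greenSolution (IccExtend zero_le_one h) a b s
  continuous_toFun := by
    have he' : Continuous fun s : Icc (0 : ℝ) 1 => e s := he.domRestrict
    have hf' : Continuous fun s : Icc (0 : ℝ) 1 => f s := hf.domRestrict
    have hh := continuous_IccExtend_zero_one h
    have hV := continuous_greenPotentialDeriv hh
    have hQ := (contDiff_greenSolution hh a b).continuous
    exact (he'.mul ((continuous_const.add hV).comp continuous_subtype_val)).add
      (hf'.mul (hQ.comp continuous_subtype_val))

section FixedPoint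

variable (he : ContinuousOn e (Icc 0 1)) (hf : ContinuousOn f (Icc 0 1)) (a b : R)

theorem lipschitzWith_bvpMap {K : NNReal} (hK : ∀ s ∈ Icc (0 : ℝ) 1, ‖e s‖ + ‖f s‖ ≤ K) :
    LipschitzWith K (bvpMap he hf a b) := by
  refine LipschitzWith.of_dist_le_mul fun h h' => ?_
  rw [dist_eq_norm, dist_eq_norm]
  refine (ContinuousMap.norm_le _ (by positivity)).2 fun s => ?_
  have hg := continuous_IccExtend_zero_one h
  have hg' := continuous_IccExtend_zero_one h'
  have hbound : ∀ σ ∈ Icc (0 : ℝ) 1,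
      ‖(IccExtend zero_le_one h - IccExtend zero_le_one h') σ‖ ≤ ‖h - h'‖ :=
    fun σ _ => (h - h').norm_coe_le_norm _
  calc ‖bvpMap he hf a b h s - bvpMap he hf a b h' s‖
      = ‖e s * greenPotentialDeriv (IccExtend zero_le_one h - IccExtend zero_le_one h') s
          + f s * greenPotential (IccExtend zero_le_one h - IccExtend zero_le_one h') s‖ := by
        rw [greenPotentialDeriv_sub hg hg', greenPotential_sub hg hg']
        simp only [bvpMap, ContinuousMap.coe_mk, greenSolution, Pi.sub_apply]
        noncomm_ring
    _ ≤ ‖e s‖ * ‖h - h'‖ + ‖f s‖ * ‖h - h'‖ :=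
        norm_add_le_of_le (norm_mul_le_of_le le_rfl (norm_greenPotentialDeriv_le hbound s.2))
          (norm_mul_le_of_le le_rfl (norm_greenPotential_le hbound s.2))
    _ ≤ K * ‖h - h'‖ := by
        rw [← add_mul]
        exact mul_le_mul_of_nonneg_right (hK s s.2) (norm_nonneg _)

theorem isBVPSolution_greenSolution_of_isFixedPt {h : C(Icc (0 : ℝ) 1, R)}
    (hfix : Function.IsFixedPt (bvpMap he hf a b) h) :
    IsBVPSolution e f a b (greenSolution (IccExtend zero_le_one h) a b) := by
  have hg := continuous_IccExtend_zero_one h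
  refine ⟨(contDiff_greenSolution hg a b).contDiffOn, fun s hs => ?_,
    by simp [greenSolution], by simp [greenSolution]⟩
  rw [derivWithin_derivWithin_greenSolution hg a b hs, derivWithin_greenSolution hg a b hs,
    IccExtend_of_mem _ _ hs]
  exact (DFunLike.congr_fun hfix ⟨s, hs⟩).symm

theorem IsBVPSolution.exists_isFixedPt {p : ℝ → R} (hp : IsBVPSolution e f a b p) :
    ∃ h, Function.IsFixedPt (bvpMap he hf a b) h ∧
      EqOn p (greenSolution (IccExtend zero_le_one h) a b) (Icc 0 1) := by
  obtain ⟨hpC, hpODE, rfl, rfl⟩ := hp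
  have hI := uniqueDiffOn_Icc (zero_lt_one' ℝ)
  let h : C(Icc (0 : ℝ) 1, R) := ⟨_, ((hpC.derivWithin hI (by norm_num)).continuousOn_derivWithin
    hI le_rfl).domRestrict⟩
  have hg := continuous_IccExtend_zero_one h
  have hp_eq : EqOn p (greenSolution (IccExtend zero_le_one h) (p 0) (p 1)) (Icc 0 1) :=
    eqOn_greenSolution hpC hg fun s hs => (IccExtend_of_mem _ h hs).symm
  have hp'_eq : ∀ s ∈ Icc (0 : ℝ) 1,
      derivWithin p (Icc 0 1) s = p 1 - p 0 + greenPotentialDeriv (IccExtend zero_le_one h) s :=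
    fun s hs => by
      rw [derivWithin_congr hp_eq (hp_eq hs)]
      exact derivWithin_greenSolution hg _ _ hs
  refine ⟨h, ContinuousMap.ext fun s => ?_, hp_eq⟩
  simp only [bvpMap, ContinuousMap.coe_mk, ← hp'_eq s s.2, ← hp_eq s.2]
  exact (hpODE s s.2).symm

end FixedPoint

theorem exists_isBVPSolution_unique (he : ContinuousOn e (Icc 0 1))
    (hf : ContinuousOn f (Icc 0 1)) (a b : R) {K : NNReal} (hK1 : K < 1)
    (hK : ∀ s ∈ Icc (0 : ℝ) 1, ‖e s‖ + ‖f s‖ ≤ K) :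
    ∃ q, IsBVPSolution e f a b q ∧ ∀ q', IsBVPSolution e f a b q' → EqOn q' q (Icc 0 1) := by
  have hΦ : ContractingWith K (bvpMap he hf a b) := ⟨hK1, lipschitzWith_bvpMap he hf a b hK⟩
  refine ⟨_, isBVPSolution_greenSolution_of_isFixedPt he hf a b hΦ.fixedPoint_isFixedPt,
    fun p hp => ?_⟩
  obtain ⟨h, hfix, hp_eq⟩ := hp.exists_isFixedPt he hf a b
  rwa [← hΦ.fixedPoint_unique hfix]

end LinearBVP

theorem eventually_forall_Icc_mul {p : ℂ → Prop} (hp : ∀ᶠ z in 𝓝 0, p z) :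
    ∀ᶠ t in 𝓝 (0 : ℂ), ∀ s ∈ Icc (0 : ℝ) 1, p (t * s) := by
  obtain ⟨δ, hδ, hball⟩ := Metric.eventually_nhds_iff.1 hp
  refine Metric.eventually_nhds_iff.2 ⟨δ, hδ, fun t ht s hs => hball ?_⟩
  rw [dist_zero_right] at ht ⊢
  rw [norm_mul, Complex.norm_real, Real.norm_of_nonneg hs.1]
  exact (mul_le_of_le_one_right (norm_nonneg t) hs.2).trans_lt ht

theorem eventually_continuousOn_comp_mul {X : Type*} [TopologicalSpace X] {G : ℂ → X}
    (hG : ∀ᶠ z in 𝓝 0, ContinuousAt G z) :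
    ∀ᶠ t in 𝓝 (0 : ℂ), ContinuousOn (fun s : ℝ => G (t * s)) (Icc 0 1) :=
  (eventually_forall_Icc_mul hG).mono fun t ht s hs =>
    ((ht s hs).comp (f := fun s : ℝ => t * s) (by fun_prop)).continuousWithinAt

theorem eventually_norm_smul_add_norm_sq_smul_le {V : Type*} [NormedAddCommGroup V]
    [NormedSpace ℂ V] {G H : ℂ → V} (hG : ContinuousAt G 0) (hH : ContinuousAt H 0) {ε : ℝ}
    (hε : 0 < ε) :
    ∀ᶠ t in 𝓝 (0 : ℂ), ∀ s ∈ Icc (0 : ℝ) 1, ‖t • G (t * s)‖ + ‖t ^ 2 • H (t * s)‖ ≤ ε := by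
  set M := ‖G 0‖ + ‖H 0‖ + 1
  have hM : 1 ≤ M := le_add_of_nonneg_left (by positivity)
  have hGH : ∀ᶠ z in 𝓝 (0 : ℂ), ‖G z‖ + ‖H z‖ < M :=
    (hG.norm.add hH.norm).eventually_lt continuousAt_const (lt_add_one _)
  have ht : ∀ᶠ t in 𝓝 (0 : ℂ), ‖t‖ < min 1 (ε / M) :=
    mem_of_superset (Metric.ball_mem_nhds 0 (by positivity)) fun t => mem_ball_zero_iff.1
  filter_upwards [eventually_forall_Icc_mul hGH, ht] with t hbound ht s hs
  have ht1 : ‖t‖ ≤ 1 := ht.le.trans (min_le_left _ _)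
  have htM : ‖t‖ * M ≤ ε := (le_div_iff₀ (by positivity)).1 (ht.le.trans (min_le_right _ _))
  rw [norm_smul, norm_smul, norm_pow]
  nlinarith [hbound s hs, norm_nonneg t, norm_nonneg (G (t * s)), norm_nonneg (H (t * s)),
    mul_le_mul_of_nonneg_right ht1 (norm_nonneg t)]

section Coefficients

theorem Matrix.PosDef.isUnit_map_ofReal {n : Type*} [Fintype n] [DecidableEq n]
    {M : Matrix n n ℝ} (hM : M.PosDef) : IsUnit (M.map (Complex.ofReal : ℝ → ℂ)) := by
  have hdet : (M.map (Complex.ofReal : ℝ → ℂ)).det = (M.det : ℂ) :=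
    (RingHom.map_det Complex.ofRealHom M).symm
  rw [Matrix.isUnit_iff_isUnit_det, isUnit_iff_ne_zero, hdet]
  exact_mod_cast hM.det_pos.ne'

variable {ν : ℕ} {A B C : ℂ → Mat ν} {z : ℂ}

theorem continuousAt_Ecoef (hA : AnalyticAt ℂ A z) (hB : ContinuousAt B z)
    (hAz : IsUnit (A z)) : ContinuousAt (Ecoef A B) z := by
  have hinv : ContinuousAt (fun w => (A w)⁻¹) z := by
    simp only [Matrix.nonsing_inv_eq_ringInverse]
    exact (hAz.unit_spec ▸ NormedRing.inverse_continuousAt hAz.unit).comp hA.continuousAt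
  have htr : ContinuousAt (fun w => (B w)ᵀ) z :=
    continuous_id.matrix_transpose.continuousAt.comp hB
  have hprod : ContinuousAt (fun w => A w * ((B w)ᵀ - B w)) z := hA.continuousAt.mul (htr.sub hB)
  exact (hA.deriv.continuousAt.mul hinv).add (hprod.const_smul (2 : ℂ))

theorem continuousAt_Fcoef (hA : ContinuousAt A z) (hB : AnalyticAt ℂ B z)
    (hC : ContinuousAt C z) : ContinuousAt (Fcoef A B C) z := by
  have hAC : ContinuousAt (fun w => A w * C w) z := hA.mul hC
  have hAB : ContinuousAt (fun w => A w * deriv B w) z := hA.mul hB.deriv.continuousAt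
  exact (hAC.const_smul (4 : ℂ)).sub (hAB.const_smul (2 : ℂ))

theorem solBVP_iff_isBVPSolution (t : ℂ) (a b : Mat ν) (q : ℝ → Mat ν) :
    SolBVP A B C t a b q ↔ IsBVPSolution (fun s => t • Ecoef A B (t * s))
      (fun s => t ^ 2 • Fcoef A B C (t * s)) a b q := by
  simp only [SolBVP, IsBVPSolution, smul_mul_assoc]
  rfl

end Coefficients

theorem statement0_general (ν : ℕ) (A B C : ℂ → Mat ν)
    (U : Set ℂ) (hU : U ∈ nhds (0 : ℂ))
    (hA : AnalyticOnNhd ℂ A U) (hB : AnalyticOnNhd ℂ B U) (hC : AnalyticOnNhd ℂ C U)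
    (A₀ : Matrix (Fin ν) (Fin ν) ℝ) (hA₀ : A₀.PosDef)
    (hA0 : A 0 = A₀.map (Complex.ofReal : ℝ → ℂ)) :
    ∃ Tbar > (0 : ℝ), ∀ t : ℂ, ‖t‖ < Tbar →
      (∃ qf : ℝ → Mat ν, SolBVP A B C t 0 1 qf ∧
        ∀ q' : ℝ → Mat ν, SolBVP A B C t 0 1 q' → EqOn q' qf (Icc 0 1)) ∧
      (∃ qs : ℝ → Mat ν, SolBVP A B C t 1 0 qs ∧
        ∀ q' : ℝ → Mat ν, SolBVP A B C t 1 0 q' → EqOn q' qs (Icc 0 1)) := by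
  have h0 : (0 : ℂ) ∈ U := mem_of_mem_nhds hU
  have hunit : IsUnit (A 0) := hA0 ▸ hA₀.isUnit_map_ofReal
  have hcoef : ∀ᶠ z in 𝓝 (0 : ℂ), ContinuousAt (Ecoef A B) z ∧ ContinuousAt (Fcoef A B C) z := by
    filter_upwards [(hA 0 h0).eventually_analyticAt, (hB 0 h0).eventually_analyticAt,
      (hC 0 h0).eventually_analyticAt,
      (hA 0 h0).continuousAt.eventually (Units.isOpen.mem_nhds hunit)] with z hAz hBz hCz hunitz
    exact ⟨continuousAt_Ecoef hAz hBz.continuousAt hunitz,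
      continuousAt_Fcoef hAz.continuousAt hBz hCz.continuousAt⟩
  obtain ⟨Tbar, hTbar, hsmall⟩ := Metric.eventually_nhds_iff.1 <|
    (eventually_continuousOn_comp_mul (hcoef.mono fun _ h => h.1)).and <|
    (eventually_continuousOn_comp_mul (hcoef.mono fun _ h => h.2)).and <|
    eventually_norm_smul_add_norm_sq_smul_le hcoef.self_of_nhds.1 hcoef.self_of_nhds.2
      (one_half_pos (α := ℝ))
  refine ⟨Tbar, hTbar, fun t ht => ?_⟩
  obtain ⟨hE, hF, hbound⟩ := hsmall (by rwa [dist_zero_right])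
  have hsol (a b : Mat ν) := exists_isBVPSolution_unique (hE.const_smul t) (hF.const_smul (t ^ 2))
    a b (K := 2⁻¹) (by norm_num) (by simpa using hbound)
  simp only [solBVP_iff_isBVPSolution]
  exact ⟨hsol 0 1, hsol 1 0⟩

theorem statement0 (ν : ℕ) (hν : 1 ≤ ν) (A B C : ℂ → Mat ν)
    (U : Set ℂ) (hU : U ∈ nhds (0 : ℂ)) (hUopen : IsOpen U)
    (hA : AnalyticOnNhd ℂ A U) (hB : AnalyticOnNhd ℂ B U) (hC : AnalyticOnNhd ℂ C U)
    (hAsymm : ∀ t ∈ U, (A t).IsSymm) (hCsymm : ∀ t ∈ U, (C t).IsSymm)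
    (A₀ : Matrix (Fin ν) (Fin ν) ℝ) (hA₀ : A₀.PosDef)
    (hA0 : A 0 = A₀.map (Complex.ofReal : ℝ → ℂ)) :
    ∃ Tbar > (0 : ℝ), ∀ t : ℂ, ‖t‖ < Tbar →
      (∃ qf : ℝ → Mat ν, SolBVP A B C t 0 1 qf ∧
        ∀ q' : ℝ → Mat ν, SolBVP A B C t 0 1 q' → EqOn q' qf (Icc 0 1)) ∧
      (∃ qs : ℝ → Mat ν, SolBVP A B C t 1 0 qs ∧
        ∀ q' : ℝ → Mat ν, SolBVP A B C t 1 0 q' → EqOn q' qs (Icc 0 1)) :=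
  statement0_general ν A B C U hU hA hB hC A₀ hA₀ hA0
end
end

section
/- For small t > 0 and x, y ∈ ℂ^ν, let q♮_t(s) := q♭_t(s)x + q♯_t(s)y on [0,t]. Then for every s ∈ [0,t], the vector w(s) := ∂_t[q♮_t(s)] + q♭_t(s)·q̇♮_t(t) vanishes, where ∂_t denotes differentiation of the family with respect to the parameter t at fixed s, and q̇♮_t(t) denotes the derivative of q♮_t with respect to s evaluated at s = t. Equivalently, (∂_t + q̇♮_t(t)·∂_x) q♮_{t,α}(s) = 0 for each coordinate α. -/
open Matrix Set MeasureTheory Filter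

attribute [local instance] Matrix.linftyOpNormedAddCommGroup Matrix.linftyOpNormedRing
  Matrix.linftyOpNormedAlgebra

noncomputable section

/-- `q : [0,τ] → Mat ν` is a C² solution of the matrix Euler–Lagrange equation
`q̈(s) = E(s)·q̇(s) + F(s)·q(s)` with boundary values `q 0 = a`, `q τ = b`. -/
def SolReal {ν : ℕ} (A B C : ℂ → Mat ν) (τ : ℝ) (a b : Mat ν) (q : ℝ → Mat ν) : Prop :=
  ContDiffOn ℝ 2 q (Icc 0 τ) ∧
  (∀ s ∈ Icc (0 : ℝ) τ,
      derivWithin (derivWithin q (Icc 0 τ)) (Icc 0 τ) s =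
        Ecoef A B (s : ℂ) * derivWithin q (Icc 0 τ) s
          + Fcoef A B C (s : ℂ) * q s) ∧
  q 0 = a ∧ q τ = b

/-! Write `g τ u = q♭_τ(u) x + q♯_τ(u) y`. Differentiating the Euler–Lagrange equation for `g τ`
in the parameter `τ` (Schwarz's theorem lets `∂_τ` commute with `∂_u`) shows that `∂_τ g(t, ·)`
solves the same linear equation. At `u = t` the equation for `g τ` is only known for `τ ≥ t`, but
a one-sided derivative suffices since `g` is smooth in `τ`. As `g τ 0 = y` and `g τ τ = x` for all
`τ`, the boundary values of `∂_τ g(t, ·)` are `0` and `-∂_u g(t, t)`, exactly those of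
`-q♭_t(·) ∂_u g(t, t)`. The difference of these two solutions vanishes by uniqueness. -/

open Topology Function

section Slices

variable {V : Type*} [NormedAddCommGroup V] [NormedSpace ℝ V]
  {g : ℝ → ℝ → V} {Ω : Set (ℝ × ℝ)} {τ u : ℝ}

theorem DifferentiableAt.hasDerivAt_slice_fst (h : DifferentiableAt ℝ (uncurry g) (τ, u)) :
    HasDerivAt (fun τ => g τ u) (fderiv ℝ (uncurry g) (τ, u) (1, 0)) τ :=
  h.hasFDerivAt.comp_hasDerivAt_of_eq τ ((hasDerivAt_id' τ).prodMk (hasDerivAt_const τ u)) rfl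

theorem DifferentiableAt.hasDerivAt_slice_snd (h : DifferentiableAt ℝ (uncurry g) (τ, u)) :
    HasDerivAt (g τ) (fderiv ℝ (uncurry g) (τ, u) (0, 1)) u :=
  h.hasFDerivAt.comp_hasDerivAt_of_eq u ((hasDerivAt_const u τ).prodMk (hasDerivAt_id' u)) rfl

variable {m n : WithTop ℕ∞}

theorem ContDiffOn.differentiableAt_slice_fst (hΩ : IsOpen Ω) (hg : ContDiffOn ℝ n (uncurry g) Ω)
    (hn : n ≠ 0) (hp : (τ, u) ∈ Ω) : DifferentiableAt ℝ (fun τ => g τ u) τ :=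
  ((hg.contDiffAt (hΩ.mem_nhds hp)).differentiableAt hn).hasDerivAt_slice_fst.differentiableAt

theorem ContDiffOn.uncurry_deriv_fst (hΩ : IsOpen Ω) (hmn : m + 1 ≤ n)
    (hg : ContDiffOn ℝ n (uncurry g) Ω) :
    ContDiffOn ℝ m (uncurry fun τ u => deriv (fun τ => g τ u) τ) Ω := by
  have hn : n ≠ 0 := ne_bot_of_le_ne_bot (by simp) (le_add_self.trans hmn)
  refine ((ContinuousLinearMap.apply ℝ V ((1 : ℝ), (0 : ℝ))).contDiff.comp_contDiffOn
    (hg.fderiv_of_isOpen hΩ hmn)).congr fun p hp => ?_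
  exact ((hg.contDiffAt (hΩ.mem_nhds hp)).differentiableAt hn).hasDerivAt_slice_fst.deriv

theorem ContDiffOn.uncurry_deriv_snd (hΩ : IsOpen Ω) (hmn : m + 1 ≤ n)
    (hg : ContDiffOn ℝ n (uncurry g) Ω) :
    ContDiffOn ℝ m (uncurry fun τ u => deriv (g τ) u) Ω := by
  have hn : n ≠ 0 := ne_bot_of_le_ne_bot (by simp) (le_add_self.trans hmn)
  refine ((ContinuousLinearMap.apply ℝ V ((0 : ℝ), (1 : ℝ))).contDiff.comp_contDiffOn
    (hg.fderiv_of_isOpen hΩ hmn)).congr fun p hp => ?_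
  exact ((hg.contDiffAt (hΩ.mem_nhds hp)).differentiableAt hn).hasDerivAt_slice_snd.deriv

theorem ContDiffOn.deriv_slice_comm (hΩ : IsOpen Ω) (hg : ContDiffOn ℝ 2 (uncurry g) Ω)
    (hp : (τ, u) ∈ Ω) :
    deriv (fun τ => deriv (g τ) u) τ = deriv (fun u => deriv (fun τ => g τ u) τ) u := by
  have hp' : Ω ∈ 𝓝 (τ, u) := hΩ.mem_nhds hp
  have hsymm : IsSymmSndFDerivAt ℝ (uncurry g) (τ, u) :=
    (hg.contDiffAt hp').isSymmSndFDerivAt (by simp [minSmoothness_of_isRCLikeNormedField])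
  have hd : DifferentiableAt ℝ (fderiv ℝ (uncurry g)) (τ, u) :=
    ((hg.fderiv_of_isOpen hΩ (m := 1) (by norm_num)).contDiffAt hp').differentiableAt one_ne_zero
  have hgd : ∀ q ∈ Ω, DifferentiableAt ℝ (uncurry g) q := fun q hq =>
    (hg.contDiffAt (hΩ.mem_nhds hq)).differentiableAt two_ne_zero
  have hsecond : ∀ v w : ℝ × ℝ, ∀ f : ℝ → ℝ → V,
      (uncurry f =ᶠ[𝓝 (τ, u)] fun q => fderiv ℝ (uncurry g) q v) →
      fderiv ℝ (uncurry f) (τ, u) w = fderiv ℝ (fderiv ℝ (uncurry g)) (τ, u) w v := by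
    intro v w f hf
    rw [hf.fderiv_eq, fderiv_clm_apply hd (differentiableAt_const v)]
    simp
  have h₁ : (uncurry fun τ u => deriv (fun τ => g τ u) τ) =ᶠ[𝓝 (τ, u)]
      fun q => fderiv ℝ (uncurry g) q (1, 0) := by
    filter_upwards [hp'] with q hq using (hgd q hq).hasDerivAt_slice_fst.deriv
  have h₂ : (uncurry fun τ u => deriv (g τ) u) =ᶠ[𝓝 (τ, u)]
      fun q => fderiv ℝ (uncurry g) q (0, 1) := by
    filter_upwards [hp'] with q hq using (hgd q hq).hasDerivAt_slice_snd.deriv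
  calc deriv (fun τ => deriv (g τ) u) τ
      = fderiv ℝ (uncurry fun τ u => deriv (g τ) u) (τ, u) (1, 0) :=
        (((hg.uncurry_deriv_snd hΩ (m := 1) (by norm_num)).contDiffAt hp').differentiableAt
          one_ne_zero).hasDerivAt_slice_fst.deriv
    _ = fderiv ℝ (fderiv ℝ (uncurry g)) (τ, u) (1, 0) (0, 1) := hsecond _ _ _ h₂
    _ = fderiv ℝ (fderiv ℝ (uncurry g)) (τ, u) (0, 1) (1, 0) := hsymm _ _
    _ = fderiv ℝ (uncurry fun τ u => deriv (fun τ => g τ u) τ) (τ, u) (0, 1) :=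
        (hsecond _ _ _ h₁).symm
    _ = deriv (fun u => deriv (fun τ => g τ u) τ) u :=
        ((((hg.uncurry_deriv_fst hΩ (m := 1) (by norm_num)).contDiffAt hp').differentiableAt
          one_ne_zero).hasDerivAt_slice_snd.deriv).symm

theorem ContDiffOn.contDiff_slice {I : Set ℝ}
    (hg : ContDiffOn ℝ n (uncurry g) (I ×ˢ univ)) (hτ : τ ∈ I) : ContDiff ℝ n (g τ) :=
  contDiffOn_univ.1
    (hg.comp (contDiff_const.prodMk contDiff_id).contDiffOn fun _ _ => ⟨hτ, trivial⟩)

theorem DifferentiableAt.hasDerivAt_diag (h : DifferentiableAt ℝ (uncurry g) (τ, τ)) :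
    HasDerivAt (fun τ => g τ τ) (deriv (fun σ => g σ τ) τ + deriv (g τ) τ) τ := by
  have := h.hasFDerivAt.comp_hasDerivAt_of_eq τ ((hasDerivAt_id' τ).prodMk (hasDerivAt_id' τ)) rfl
  rwa [show ((1 : ℝ), (1 : ℝ)) = (1, 0) + (0, 1) by simp, map_add,
    ← h.hasDerivAt_slice_fst.deriv, ← h.hasDerivAt_slice_snd.deriv] at this

end Slices

section LinearODE

variable {V : Type*} [NormedAddCommGroup V] [NormedSpace ℝ V]

theorem ContDiff.differentiable_deriv {f : ℝ → V} (hf : ContDiff ℝ 2 f) :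
    Differentiable ℝ (deriv f) :=
  (hf.deriv' (n := 1)).differentiable one_ne_zero

theorem derivWithin_derivWithin_Icc {f : ℝ → V} {a b s : ℝ} (hf : ContDiff ℝ 2 f) (hab : a < b)
    (hs : s ∈ Icc a b) :
    derivWithin (derivWithin f (Icc a b)) (Icc a b) s = deriv (deriv f) s := by
  have hu := uniqueDiffOn_Icc hab
  rw [derivWithin_congr (fun u hu' => (hf.differentiable two_ne_zero u).derivWithin (hu u hu'))
    ((hf.differentiable two_ne_zero s).derivWithin (hu s hs))]
  exact (hf.differentiable_deriv s).derivWithin (hu s hs)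

theorem deriv_eq_of_eventuallyEq_nhdsGE {f₁ f₂ : ℝ → V} {t : ℝ} (h₁ : DifferentiableAt ℝ f₁ t)
    (h₂ : DifferentiableAt ℝ f₂ t) (h : f₁ =ᶠ[𝓝[≥] t] f₂) : deriv f₁ t = deriv f₂ t := by
  rw [← h₁.derivWithin (uniqueDiffWithinAt_Ici t), ← h₂.derivWithin (uniqueDiffWithinAt_Ici t)]
  exact h.derivWithin_eq (h.eq_of_nhdsWithin self_mem_Ici)

variable (E F : ℝ → V →L[ℝ] V)

def SolvesLinearODEOn (S : Set ℝ) (w : ℝ → V) : Prop :=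
  ∀ s ∈ S, deriv (deriv w) s = E s (deriv w s) + F s (w s)

variable {E F}

theorem SolvesLinearODEOn.add {S : Set ℝ} {w₁ w₂ : ℝ → V} (h₁ : SolvesLinearODEOn E F S w₁)
    (h₂ : SolvesLinearODEOn E F S w₂) (hw₁ : ContDiff ℝ 2 w₁) (hw₂ : ContDiff ℝ 2 w₂) :
    SolvesLinearODEOn E F S (w₁ + w₂) := by
  intro s hs
  have hd : deriv (w₁ + w₂) = deriv w₁ + deriv w₂ := funext fun u =>
    ((hw₁.differentiable two_ne_zero u).hasDerivAt.add
      (hw₂.differentiable two_ne_zero u).hasDerivAt).deriv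
  rw [hd,
    ((hw₁.differentiable_deriv s).hasDerivAt.add (hw₂.differentiable_deriv s).hasDerivAt).deriv]
  simp only [Pi.add_apply, h₁ s hs, h₂ s hs, map_add]
  abel

theorem SolvesLinearODEOn.derivWithin_Icc {w : ℝ → V} {a b : ℝ}
    (h : SolvesLinearODEOn E F (Icc a b) w) (hw : ContDiff ℝ 2 w) (hab : a < b) {s : ℝ}
    (hs : s ∈ Icc a b) :
    derivWithin (derivWithin w (Icc a b)) (Icc a b) s =
      E s (derivWithin w (Icc a b) s) + F s (w s) := by
  rw [derivWithin_derivWithin_Icc hw hab hs,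
    (hw.differentiable two_ne_zero s).derivWithin (uniqueDiffOn_Icc hab s hs)]
  exact h s hs

theorem ContDiffOn.solvesLinearODEOn_deriv_fst {g : ℝ → ℝ → V} {Ω : Set (ℝ × ℝ)} {t s : ℝ}
    (hΩ : IsOpen Ω) (hg : ContDiffOn ℝ 3 (uncurry g) Ω) (hp : (t, s) ∈ Ω)
    (hode : ∀ᶠ τ in 𝓝[≥] t, SolvesLinearODEOn E F {s} (g τ)) :
    SolvesLinearODEOn E F {s} (fun u => deriv (fun τ => g τ u) t) := by
  rintro s rfl
  have hg2 : ContDiffOn ℝ 2 (uncurry g) Ω := hg.of_le (by norm_num)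
  have hg' : ContDiffOn ℝ 2 (uncurry fun τ u => deriv (g τ) u) Ω :=
    hg.uncurry_deriv_snd hΩ (by norm_num)
  have hg'' : ContDiffOn ℝ 1 (uncurry fun τ u => deriv (deriv (g τ)) u) Ω :=
    hg'.uncurry_deriv_snd hΩ (by norm_num)
  have hslice : ∀ᶠ u in 𝓝 s, (t, u) ∈ Ω :=
    (Continuous.prodMk_right t).continuousAt.preimage_mem_nhds (hΩ.mem_nhds hp)
  have hswap : deriv (fun u => deriv (fun τ => g τ u) t) =ᶠ[𝓝 s]
      fun u => deriv (fun τ => deriv (g τ) u) t := by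
    filter_upwards [hslice] with u hu using (hg2.deriv_slice_comm hΩ hu).symm
  have hrhs : HasDerivAt (fun τ => E s (deriv (g τ) s) + F s (g τ s))
      (E s (deriv (fun τ => deriv (g τ) s) t) + F s (deriv (fun τ => g τ s) t)) t :=
    ((E s).hasFDerivAt.comp_hasDerivAt t
        (hg'.differentiableAt_slice_fst hΩ two_ne_zero hp).hasDerivAt).add
      ((F s).hasFDerivAt.comp_hasDerivAt t
        (hg2.differentiableAt_slice_fst hΩ two_ne_zero hp).hasDerivAt)
  calc deriv (deriv fun u => deriv (fun τ => g τ u) t) s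
      = deriv (fun u => deriv (fun τ => deriv (g τ) u) t) s := hswap.deriv_eq
    _ = deriv (fun τ => deriv (deriv (g τ)) s) t := (hg'.deriv_slice_comm hΩ hp).symm
    _ = deriv (fun τ => E s (deriv (g τ) s) + F s (g τ s)) t :=
        deriv_eq_of_eventuallyEq_nhdsGE (hg''.differentiableAt_slice_fst hΩ one_ne_zero hp)
          hrhs.differentiableAt (hode.mono fun τ hτ => hτ s rfl)
    _ = E s (deriv (fun τ => deriv (g τ) s) t) + F s (deriv (fun τ => g τ s) t) := hrhs.deriv
    _ = _ := by rw [hg2.deriv_slice_comm hΩ hp]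

theorem deriv_param_add_eq_zero {g : ℝ → ℝ → V} {φ : ℝ → V} {x y : V} {T₀ t : ℝ}
    (hg : ContDiffOn ℝ 3 (uncurry g) (Ioo 0 T₀ ×ˢ univ))
    (hode : ∀ τ ∈ Ioo 0 T₀, SolvesLinearODEOn E F (Icc 0 τ) (g τ))
    (hg₀ : ∀ τ ∈ Ioo 0 T₀, g τ 0 = y) (hgτ : ∀ τ ∈ Ioo 0 T₀, g τ τ = x) (ht : t ∈ Ioo 0 T₀)
    (hφ : ContDiff ℝ 2 φ) (hφode : SolvesLinearODEOn E F (Icc 0 t) φ) (hφ₀ : φ 0 = 0)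
    (hφt : φ t = deriv (g t) t)
    (huniq : ∀ w : ℝ → V, ContDiff ℝ 2 w → SolvesLinearODEOn E F (Icc 0 t) w → w 0 = 0 →
      w t = 0 → ∀ s ∈ Icc 0 t, w s = 0) :
    ∀ s ∈ Icc 0 t, deriv (fun τ => g τ s) t + φ s = 0 := by
  have hΩ : IsOpen (Ioo 0 T₀ ×ˢ (univ : Set ℝ)) := isOpen_Ioo.prod isOpen_univ
  have hmem : ∀ u, (t, u) ∈ Ioo 0 T₀ ×ˢ (univ : Set ℝ) := fun _ => ⟨ht, trivial⟩
  have hnhds : Ioo 0 T₀ ∈ 𝓝 t := isOpen_Ioo.mem_nhds ht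
  set ġ := fun u => deriv (fun τ => g τ u) t
  have hġ : ContDiff ℝ 2 ġ := (hg.uncurry_deriv_fst hΩ (by norm_num)).contDiff_slice ht
  have hġode : SolvesLinearODEOn E F (Icc 0 t) ġ := by
    intro s hs
    refine hg.solvesLinearODEOn_deriv_fst hΩ (hmem s) ?_ s rfl
    filter_upwards [Ico_mem_nhdsGE ht.2] with τ hτ s' hs'
    rw [mem_singleton_iff.1 hs']
    exact hode τ ⟨ht.1.trans_le hτ.1, hτ.2⟩ s ⟨hs.1, hs.2.trans hτ.1⟩
  have hġ₀ : ġ 0 = 0 := by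
    have : (fun τ => g τ 0) =ᶠ[𝓝 t] fun _ => y := eventually_of_mem hnhds hg₀
    simp [ġ, this.deriv_eq]
  have hġt : ġ t + deriv (g t) t = 0 :=
    ((hg.contDiffAt (hΩ.mem_nhds (hmem t))).differentiableAt (by norm_num)).hasDerivAt_diag.unique
      ((hasDerivAt_const t x).congr_of_eventuallyEq (eventually_of_mem hnhds hgτ))
  exact huniq (ġ + φ) (hġ.add hφ) (hġode.add hφode hġ hφ) (by simp [hġ₀, hφ₀])
    (by simp [hφt, hġt])

end LinearODE

section MatrixMulVec

variable {ν : ℕ}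

def Matrix.mulVecCLM (M : Mat ν) : (Fin ν → ℂ) →L[ℝ] Fin ν → ℂ :=
  LinearMap.toContinuousLinearMap (mulVecBilin ℝ ℝ M)

def Matrix.mulVecFlipCLM (z : Fin ν → ℂ) : Mat ν →L[ℝ] Fin ν → ℂ :=
  LinearMap.toContinuousLinearMap ((mulVecBilin ℝ ℝ).flip z)

@[simp] theorem Matrix.mulVecCLM_apply (M : Mat ν) (z : Fin ν → ℂ) :
    M.mulVecCLM z = M *ᵥ z := rfl

theorem ContDiff.mulVec_const {k : WithTop ℕ∞} {q : ℝ → Mat ν} (hq : ContDiff ℝ k q)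
    (z : Fin ν → ℂ) : ContDiff ℝ k (fun u => q u *ᵥ z) :=
  (mulVecFlipCLM z).contDiff.comp hq

theorem deriv_mulVec_const {q : ℝ → Mat ν} (hq : Differentiable ℝ q) (z : Fin ν → ℂ) :
    deriv (fun u => q u *ᵥ z) = fun u => deriv q u *ᵥ z :=
  funext fun u => ((mulVecFlipCLM z).hasFDerivAt.comp_hasDerivAt u (hq u).hasDerivAt).deriv

theorem SolReal.solvesLinearODEOn_mulVec {A B C : ℂ → Mat ν} {τ : ℝ} {a b : Mat ν}
    {q : ℝ → Mat ν} (h : SolReal A B C τ a b q) (hτ : 0 < τ) (hq : ContDiff ℝ 2 q)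
    (z : Fin ν → ℂ) :
    SolvesLinearODEOn (fun s : ℝ => (Ecoef A B s).mulVecCLM)
      (fun s : ℝ => (Fcoef A B C s).mulVecCLM) (Icc 0 τ) (fun u => q u *ᵥ z) := by
  intro s hs
  have h₁ : derivWithin q (Icc 0 τ) s = deriv q s :=
    (hq.differentiable two_ne_zero s).derivWithin (uniqueDiffOn_Icc hτ s hs)
  have h₂ : derivWithin (derivWithin q (Icc 0 τ)) (Icc 0 τ) s = deriv (deriv q) s :=
    derivWithin_derivWithin_Icc hq hτ hs
  obtain ⟨-, hode, -, -⟩ := h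
  have hode := hode s hs
  rw [h₁, h₂] at hode
  -- naming `q := deriv q` keeps the `Mat ν` instances of `SolReal`, so that `hode` rewrites
  rw [deriv_mulVec_const (hq.differentiable two_ne_zero),
    deriv_mulVec_const (q := deriv q) hq.differentiable_deriv]
  simp [hode, add_mulVec, mulVec_mulVec]

end MatrixMulVec

theorem statement8_general (ν : ℕ) (A B C : ℂ → Mat ν)
    (T₀ : ℝ) (hT₀ : 0 < T₀) (qb qs : ℝ → ℝ → Mat ν)
    (hqb : ∀ τ : ℝ, 0 < τ → τ < T₀ → SolReal A B C τ 0 1 (qb τ))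
    (hqs : ∀ τ : ℝ, 0 < τ → τ < T₀ → SolReal A B C τ 1 0 (qs τ))
    (hqbsm : ContDiffOn ℝ (⊤ : ℕ∞) (fun p : ℝ × ℝ => qb p.1 p.2)
      (Ioo 0 T₀ ×ˢ (univ : Set ℝ)))
    (hqssm : ContDiffOn ℝ (⊤ : ℕ∞) (fun p : ℝ × ℝ => qs p.1 p.2)
      (Ioo 0 T₀ ×ˢ (univ : Set ℝ)))
    (huniq : ∀ τ : ℝ, 0 < τ → τ < T₀ → ∀ w : ℝ → (Fin ν → ℂ),
      ContDiffOn ℝ 2 w (Icc 0 τ) →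
      (∀ s ∈ Icc (0 : ℝ) τ,
        derivWithin (derivWithin w (Icc 0 τ)) (Icc 0 τ) s =
          (Ecoef A B (s : ℂ)).mulVec (derivWithin w (Icc 0 τ) s)
            + (Fcoef A B C (s : ℂ)).mulVec (w s)) →
      w 0 = 0 → w τ = 0 → ∀ s ∈ Icc (0 : ℝ) τ, w s = 0) :
    ∃ T : ℝ, 0 < T ∧ T ≤ T₀ ∧ ∀ t : ℝ, 0 < t → t < T →
      ∀ x y : Fin ν → ℂ, ∀ s ∈ Icc (0 : ℝ) t,
        deriv (fun τ : ℝ => (qb τ s).mulVec x + (qs τ s).mulVec y) t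
          + (qb t s).mulVec
              (derivWithin (fun u : ℝ => (qb t u).mulVec x + (qs t u).mulVec y)
                (Icc 0 t) t) = 0 := by
  refine ⟨T₀, hT₀, le_rfl, fun t ht htT x y => ?_⟩
  have htI : t ∈ Ioo 0 T₀ := ⟨ht, htT⟩
  have hqb3 : ContDiffOn ℝ 3 (uncurry qb) (Ioo 0 T₀ ×ˢ univ) :=
    hqbsm.of_le (WithTop.coe_le_coe.2 le_top)
  have hqs3 : ContDiffOn ℝ 3 (uncurry qs) (Ioo 0 T₀ ×ˢ univ) :=
    hqssm.of_le (WithTop.coe_le_coe.2 le_top)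
  have hslice : ∀ {q : ℝ → ℝ → Mat ν}, ContDiffOn ℝ 3 (uncurry q) (Ioo 0 T₀ ×ˢ univ) →
      ∀ τ ∈ Ioo 0 T₀, ContDiff ℝ 2 (q τ) := fun hq τ hτ =>
    (hq.contDiff_slice hτ).of_le (by norm_num)
  set g : ℝ → ℝ → Fin ν → ℂ := fun τ u => qb τ u *ᵥ x + qs τ u *ᵥ y
  have hg : ContDiffOn ℝ 3 (uncurry g) (Ioo 0 T₀ ×ˢ univ) :=
    ((mulVecFlipCLM x).contDiff.comp_contDiffOn hqb3).add
      ((mulVecFlipCLM y).contDiff.comp_contDiffOn hqs3)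
  have hode : ∀ τ ∈ Ioo 0 T₀, SolvesLinearODEOn (fun s : ℝ => (Ecoef A B s).mulVecCLM)
      (fun s : ℝ => (Fcoef A B C s).mulVecCLM) (Icc 0 τ) (g τ) := fun τ hτ =>
    ((hqb τ hτ.1 hτ.2).solvesLinearODEOn_mulVec hτ.1 (hslice hqb3 τ hτ) x).add
      ((hqs τ hτ.1 hτ.2).solvesLinearODEOn_mulVec hτ.1 (hslice hqs3 τ hτ) y)
      ((hslice hqb3 τ hτ).mulVec_const x) ((hslice hqs3 τ hτ).mulVec_const y)
  have hv : derivWithin (g t) (Icc 0 t) t = deriv (g t) t :=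
    ((hg.contDiff_slice htI).differentiable (by norm_num) t).derivWithin
      (uniqueDiffOn_Icc ht t (right_mem_Icc.2 ht.le))
  change ∀ s ∈ Icc 0 t, deriv (fun τ => g τ s) t + qb t s *ᵥ derivWithin (g t) (Icc 0 t) t = 0
  rw [hv]
  obtain ⟨-, -, hqb₀, hqbt⟩ := hqb t ht htT
  exact deriv_param_add_eq_zero hg hode (x := x) (y := y)
    (fun τ hτ => by simp [g, (hqb τ hτ.1 hτ.2).2.2.1, (hqs τ hτ.1 hτ.2).2.2.1])
    (fun τ hτ => by simp [g, (hqb τ hτ.1 hτ.2).2.2.2, (hqs τ hτ.1 hτ.2).2.2.2]) htI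
    ((hslice hqb3 t htI).mulVec_const _)
    ((hqb t ht htT).solvesLinearODEOn_mulVec ht (hslice hqb3 t htI) _)
    (by simp [hqb₀]) (by simp [hqbt]) fun w hw hwode =>
      huniq t ht htT w hw.contDiffOn fun s hs => hwode.derivWithin_Icc hw ht hs

theorem statement8 (ν : ℕ) (hν : 1 ≤ ν) (A B C : ℂ → Mat ν)
    (U : Set ℂ) (hU : U ∈ nhds (0 : ℂ)) (hUopen : IsOpen U)
    (hA : AnalyticOnNhd ℂ A U) (hB : AnalyticOnNhd ℂ B U) (hC : AnalyticOnNhd ℂ C U)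
    (hAsymm : ∀ t ∈ U, (A t).IsSymm) (hCsymm : ∀ t ∈ U, (C t).IsSymm)
    (A₀ : Matrix (Fin ν) (Fin ν) ℝ) (hA₀ : A₀.PosDef)
    (hA0 : A 0 = A₀.map (Complex.ofReal : ℝ → ℂ))
    (T₀ : ℝ) (hT₀ : 0 < T₀) (qb qs : ℝ → ℝ → Mat ν)
    (hqb : ∀ τ : ℝ, 0 < τ → τ < T₀ → SolReal A B C τ 0 1 (qb τ))
    (hqs : ∀ τ : ℝ, 0 < τ → τ < T₀ → SolReal A B C τ 1 0 (qs τ))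
    (hqbsm : ContDiffOn ℝ (⊤ : ℕ∞) (fun p : ℝ × ℝ => qb p.1 p.2)
      (Ioo 0 T₀ ×ˢ (univ : Set ℝ)))
    (hqssm : ContDiffOn ℝ (⊤ : ℕ∞) (fun p : ℝ × ℝ => qs p.1 p.2)
      (Ioo 0 T₀ ×ˢ (univ : Set ℝ)))
    (huniq : ∀ τ : ℝ, 0 < τ → τ < T₀ → ∀ w : ℝ → (Fin ν → ℂ),
      ContDiffOn ℝ 2 w (Icc 0 τ) →
      (∀ s ∈ Icc (0 : ℝ) τ,
        derivWithin (derivWithin w (Icc 0 τ)) (Icc 0 τ) s =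
          (Ecoef A B (s : ℂ)).mulVec (derivWithin w (Icc 0 τ) s)
            + (Fcoef A B C (s : ℂ)).mulVec (w s)) →
      w 0 = 0 → w τ = 0 → ∀ s ∈ Icc (0 : ℝ) τ, w s = 0) :
    ∃ T : ℝ, 0 < T ∧ T ≤ T₀ ∧ ∀ t : ℝ, 0 < t → t < T →
      ∀ x y : Fin ν → ℂ, ∀ s ∈ Icc (0 : ℝ) t,
        deriv (fun τ : ℝ => (qb τ s).mulVec x + (qs τ s).mulVec y) t
          + (qb t s).mulVec
              (derivWithin (fun u : ℝ => (qb t u).mulVec x + (qs t u).mulVec y)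
                (Icc 0 t) t) = 0 :=
  statement8_general ν A B C T₀ hT₀ qb qs hqb hqs hqbsm hqssm huniq
end
end

section
/- Let T̃ > 0 and M > 0. There exists T > 0 with the following property: for every analytic function f on the disc D_{T̃} = {z ∈ ℂ : |z| < T̃} satisfying f(0) = 0, f'(0) = 1, sup_{t ∈ D_{T̃}} |f(t)| ≤ M, and such that for every t ∈ D_{T̃}, Re t = 0 implies Re f(t) = 0, one has: for every t ∈ D_T, Re t > 0 implies Re f(t) > 0. -/
/-!
Cauchy's estimate bounds `f'` on the disc of radius `r = T̃/2` by `2M/r`, and the Schwarz lemma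
applied to `f'` then gives `‖f'(z) - 1‖ ≤ 4M/r² ‖z‖`. Hence `Re f' > 0` on a disc `D_T` whose
radius depends only on `T̃` and `M`. On that disc `Re f` is strictly increasing along horizontal
segments; since it vanishes on the imaginary axis, it is positive to the right of it.
-/

open Metric Set

theorem norm_deriv_le_of_norm_le_on_ball {f : ℂ → ℂ} {c : ℂ} {R M : ℝ} (hR : 0 < R)
    (hf : DifferentiableOn ℂ f (ball c R)) (hM : ∀ w ∈ ball c R, ‖f w‖ ≤ M) :
    ‖deriv f c‖ ≤ 2 * M / R := by
  refine Complex.norm_deriv_le_div_of_mapsTo_ball hf (fun w hw => ?_) hR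
  rw [mem_closedBall, dist_eq_norm]
  calc ‖f w - f c‖ ≤ ‖f w‖ + ‖f c‖ := norm_sub_le _ _
    _ ≤ 2 * M := by linarith [hM w hw, hM c (mem_ball_self hR)]

theorem norm_deriv_sub_deriv_le {f : ℂ → ℂ} {c z : ℂ} {r M : ℝ} (hr : 0 < r)
    (hf : DifferentiableOn ℂ f (ball c (2 * r))) (hM : ∀ w ∈ ball c (2 * r), ‖f w‖ ≤ M)
    (hz : z ∈ ball c r) : ‖deriv f z - deriv f c‖ ≤ 4 * M / r ^ 2 * ‖z - c‖ := by
  have hsub : ∀ w ∈ ball c r, ball w r ⊆ ball c (2 * r) := fun w hw =>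
    ball_subset_ball' (by linarith [mem_ball.1 hw])
  have hbd : ∀ w ∈ ball c r, ‖deriv f w‖ ≤ 2 * M / r := fun w hw =>
    norm_deriv_le_of_norm_le_on_ball hr (hf.mono (hsub w hw)) fun v hv => hM v (hsub w hw hv)
  have hmaps : MapsTo (deriv f) (ball c r) (closedBall (deriv f c) (4 * M / r)) := by
    intro w hw
    rw [mem_closedBall, dist_eq_norm]
    calc ‖deriv f w - deriv f c‖ ≤ ‖deriv f w‖ + ‖deriv f c‖ := norm_sub_le _ _
      _ ≤ 2 * M / r + 2 * M / r := add_le_add (hbd w hw) (hbd c (mem_ball_self hr))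
      _ = 4 * M / r := by ring
  have hdf : DifferentiableOn ℂ (deriv f) (ball c r) :=
    (hf.deriv isOpen_ball).mono (ball_subset_ball (by linarith))
  have := Complex.dist_le_div_mul_dist_of_mapsTo_ball hdf hmaps hz
  rwa [dist_eq_norm, dist_eq_norm, div_div, ← sq] at this

theorem re_lt_re_add_of_re_deriv_pos {f : ℂ → ℂ} {s : Set ℂ} (hs : Convex ℝ s) (hso : IsOpen s)
    (hf : DifferentiableOn ℂ f s) (hpos : ∀ w ∈ s, 0 < (deriv f w).re) {z : ℂ} {a : ℝ}
    (hz : z ∈ s) (hza : z + a ∈ s) (ha : 0 < a) : (f z).re < (f (z + a)).re := by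
  set D : Set ℝ := {u | z + u ∈ s}
  have hDo : IsOpen D := hso.preimage (by fun_prop)
  have hderiv : ∀ u ∈ D, HasDerivAt (fun u : ℝ => (f (z + u)).re) (deriv f (z + u)).re u := by
    intro u hu
    have hfz : HasDerivAt f (deriv f (z + u)) (z + u) :=
      (hf.differentiableAt (hso.mem_nhds hu)).hasDerivAt
    simpa using (hfz.comp_const_add z u).real_of_complex
  have hD : Convex ℝ D := (hs.translate_preimage_right z).linear_preimage Complex.ofRealCLM.toLinearMap
  have hmono : StrictMonoOn (fun u : ℝ => (f (z + u)).re) D :=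
    strictMonoOn_of_deriv_pos hD (fun u hu => (hderiv u hu).continuousAt.continuousWithinAt)
      fun u hu => by
        rw [hDo.interior_eq] at hu
        rw [(hderiv u hu).deriv]
        exact hpos _ hu
  simpa using hmono (show (0 : ℝ) ∈ D by simpa [D] using hz) hza ha

theorem re_deriv_pos_of_norm_le {f : ℂ → ℂ} {r M : ℝ} (hr : 0 < r) (hM : 0 < M)
    (hf : DifferentiableOn ℂ f (ball 0 (2 * r))) (hbd : ∀ w ∈ ball 0 (2 * r), ‖f w‖ ≤ M)
    (hf' : deriv f 0 = 1) {z : ℂ} (hz : z ∈ ball 0 (min r (r ^ 2 / (4 * M)))) :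
    0 < (deriv f z).re := by
  rw [mem_ball_zero_iff, lt_min_iff] at hz
  have hclose : ‖deriv f z - 1‖ < 1 :=
    calc ‖deriv f z - 1‖ ≤ 4 * M / r ^ 2 * ‖z‖ := by
          simpa [hf'] using norm_deriv_sub_deriv_le hr hf hbd (mem_ball_zero_iff.2 hz.1)
      _ < 4 * M / r ^ 2 * (r ^ 2 / (4 * M)) := by gcongr; exact hz.2
      _ = 1 := by field_simp
  have := (abs_lt.1 ((Complex.abs_re_le_norm _).trans_lt hclose)).1
  simp only [Complex.sub_re, Complex.one_re] at this
  linarith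

/-- Lemma 3.6 of the paper: an analytic function with `f(0)=0`, `f'(0)=1`, bounded by `M`,
whose real part vanishes on the imaginary axis, has positive real part on
`{Re t > 0}` near the origin, uniformly in `f`. -/
theorem statement9 (Ttil M : ℝ) (hT : 0 < Ttil) (hM : 0 < M) :
    ∃ T > (0 : ℝ), ∀ f : ℂ → ℂ,
      AnalyticOnNhd ℂ f (Metric.ball (0 : ℂ) Ttil) →
      f 0 = 0 → deriv f 0 = 1 →
      (∀ t ∈ Metric.ball (0 : ℂ) Ttil, ‖f t‖ ≤ M) →
      (∀ t ∈ Metric.ball (0 : ℂ) Ttil, t.re = 0 → (f t).re = 0) →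
      ∀ t ∈ Metric.ball (0 : ℂ) T, 0 < t.re → 0 < (f t).re := by
  set T := min (Ttil / 2) ((Ttil / 2) ^ 2 / (4 * M))
  refine ⟨T, by positivity, fun f hf _ hf' hbd him t ht hre => ?_⟩
  have hTtil : 2 * (Ttil / 2) = Ttil := by ring
  have hTsub : ball (0 : ℂ) T ⊆ ball 0 Ttil :=
    ball_subset_ball ((min_le_left _ _).trans (by linarith))
  have hpos : ∀ w ∈ ball (0 : ℂ) T, 0 < (deriv f w).re := fun w hw =>
    re_deriv_pos_of_norm_le (half_pos hT) hM (by rw [hTtil]; exact hf.differentiableOn)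
      (by rwa [hTtil]) hf' hw
  set z : ℂ := t.im * Complex.I
  have hzT : z ∈ ball (0 : ℂ) T := by
    rw [mem_ball_zero_iff] at ht ⊢
    simpa [z] using (Complex.abs_im_le_norm t).trans_lt ht
  have hzt : z + t.re = t := by simp [z, Complex.ext_iff]
  calc 0 = (f z).re := (him z (hTsub hzT) (by simp [z])).symm
    _ < (f (z + t.re)).re := re_lt_re_add_of_re_deriv_pos (convex_ball 0 T) isOpen_ball
        (hf.differentiableOn.mono hTsub) hpos hzT (by rwa [hzt]) hre
    _ = (f t).re := by rw [hzt]
end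

section
/- Let A₀ be a real symmetric positive definite ν×ν matrix, let n ≥ 1, let 0 < s₁ < s₂ < ⋯ < s_n < 1, and let ξ₁, …, ξ_n ∈ ℝ^ν be not all zero. Then Σ_{j,k=1}^{n} min(s_j, s_k)·(1 − max(s_j, s_k))·(ξ_j · A₀ ξ_k) > 0. In other words, the bilinear form (μ₁, μ₂)₀ := ∫₀¹∫₀¹ (s ∧ s')(1 − s ∨ s') A₀ · dμ₁(s) ⊗ dμ₂(s') is positive definite on the space of measures μ = Σ_{j=1}^n δ_{s_j} ξ_j with s_j ∈ (0,1) and ξ_j ∈ ℝ^ν. -/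
open Matrix Set
open scoped Kronecker

/-!
The kernel `min(s, s') (1 - max(s, s'))` is the covariance of the Brownian bridge:
it equals `∫₀¹ (1[x < s] - s) (1[x < s'] - s') dx`. Cutting `[0, 1]` at the points `s_j`, the
integrand is constant on each of the `n + 1` gaps, so the `n × n` matrix `G` of the kernel
factors as `Bᵀ D B`, with `D` the diagonal of the (positive) gap lengths and `B` the values of
the step functions on the gaps. Consecutive rows of `B` differ by a unit vector, so `B` is
injective and `G` is positive definite. The quadratic form of the theorem is `ξ ⬝ (G ⊗ A₀) ξ`,
and a Kronecker product of positive definite matrices is positive definite.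
-/

lemma Fin.sum_ite_le_sub_succ {N : ℕ} (t : ℕ → ℝ) {m : ℕ} (hm : m < N) :
    ∑ i : Fin N, (if (i : ℕ) ≤ m then t (i + 1) - t i else 0) = t (m + 1) - t 0 := by
  rw [Fin.sum_univ_eq_sum_range (fun i => if i ≤ m then t (i + 1) - t i else 0),
    ← Finset.sum_filter]
  have hfilter : (Finset.range N).filter (· ≤ m) = Finset.range (m + 1) := by
    ext i; simp only [Finset.mem_filter, Finset.mem_range]; omega
  rw [hfilter, Finset.sum_range_sub]

namespace BrownianBridge

variable {n : ℕ} (s : Fin n → ℝ)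

/-- `gridPoint s` lists `0, s₀, …, s_{n-1}, 1`. -/
def gridPoint : ℕ → ℝ
  | 0 => 0
  | i + 1 => if h : i < n then s ⟨i, h⟩ else 1

@[simp] lemma gridPoint_zero : gridPoint s 0 = 0 := rfl

@[simp] lemma gridPoint_succ (j : Fin n) : gridPoint s (j + 1) = s j := dif_pos j.isLt

@[simp] lemma gridPoint_succ_self : gridPoint s (n + 1) = 1 := dif_neg (lt_irrefl n)

lemma gridPoint_lt_succ (hmono : StrictMono s) (hs : ∀ j, s j ∈ Ioo (0 : ℝ) 1) {i : ℕ}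
    (hi : i ≤ n) : gridPoint s i < gridPoint s (i + 1) := by
  rcases i with _ | k
  · simp only [gridPoint]
    split_ifs
    exacts [(hs _).1, one_pos]
  · have hk : k < n := by omega
    simp only [gridPoint, dif_pos hk]
    split_ifs
    exacts [hmono (Fin.mk_lt_mk.2 k.lt_succ_self), (hs _).2]

/-- Entry `(i, j)` is the value of `x ↦ 1[x < s_j] - s_j` on the `i`-th gap. -/
def stepMatrix : Matrix (Fin (n + 1)) (Fin n) ℝ :=
  of fun i j => (if (i : ℕ) ≤ j then 1 else 0) - s j

lemma stepMatrix_mulVec_castSucc_sub_succ (x : Fin n → ℝ) (j : Fin n) :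
    (stepMatrix s *ᵥ x) j.castSucc - (stepMatrix s *ᵥ x) j.succ = x j := by
  simp only [mulVec, dotProduct, stepMatrix, of_apply, ← Finset.sum_sub_distrib]
  rw [Finset.sum_eq_single j]
  · simp only [Fin.val_castSucc, le_refl, if_true, Fin.val_succ]
    rw [if_neg (by omega)]
    ring
  · intro k _ hkj
    have hjk : (j : ℕ) ≠ k := fun h => hkj (Fin.ext h).symm
    simp only [Fin.val_castSucc, Fin.val_succ]
    split_ifs <;> first | omega | ring
  · simp

lemma stepMatrix_mulVec_injective : Function.Injective (stepMatrix s).mulVec := by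
  intro x y h
  ext j
  rw [← stepMatrix_mulVec_castSucc_sub_succ s x, h, stepMatrix_mulVec_castSucc_sub_succ]

def covariance : Matrix (Fin n) (Fin n) ℝ :=
  of fun j k => min (s j) (s k) * (1 - max (s j) (s k))

lemma covariance_eq_transpose_mul_mul (hmono : Monotone s) :
    covariance s = (stepMatrix s)ᵀ *
      diagonal (fun i : Fin (n + 1) => gridPoint s (i + 1) - gridPoint s i) * stepMatrix s := by
  ext j k
  have hterm : ∀ (i : Fin (n + 1)) (ℓ : ℝ), stepMatrix s i j * ℓ * stepMatrix s i k =
      (if (i : ℕ) ≤ min (j : ℕ) k then ℓ else 0)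
        - s k * (if (i : ℕ) ≤ j then ℓ else 0) - s j * (if (i : ℕ) ≤ k then ℓ else 0)
        + s j * s k * (if (i : ℕ) ≤ n then ℓ else 0) := by
    intro i ℓ
    simp only [stepMatrix, of_apply]
    split_ifs <;> first | omega | ring
  have hmin : gridPoint s (min (j : ℕ) k + 1) = min (s j) (s k) := by
    rw [← Fin.coe_min, gridPoint_succ, hmono.map_min]
  rw [covariance, of_apply, mul_apply]
  simp only [mul_diagonal, transpose_apply, hterm, Finset.sum_add_distrib, Finset.sum_sub_distrib,
    ← Finset.mul_sum]
  rw [Fin.sum_ite_le_sub_succ _ (by omega), Fin.sum_ite_le_sub_succ _ (by omega),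
    Fin.sum_ite_le_sub_succ _ (by omega), Fin.sum_ite_le_sub_succ _ (by omega),
    hmin, gridPoint_succ, gridPoint_succ, gridPoint_succ_self, gridPoint_zero]
  linear_combination -(min_mul_max (s j) (s k))

theorem posDef_covariance (hmono : StrictMono s) (hs : ∀ j, s j ∈ Ioo (0 : ℝ) 1) :
    (covariance s).PosDef := by
  rw [covariance_eq_transpose_mul_mul s hmono.monotone, ← conjTranspose_eq_transpose_of_trivial]
  have hgaps : (diagonal fun i : Fin (n + 1) => gridPoint s (i + 1) - gridPoint s i).PosDef :=
    PosDef.diagonal fun i => sub_pos.2 (gridPoint_lt_succ s hmono hs (by omega))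
  exact hgaps.conjTranspose_mul_mul_same (stepMatrix_mulVec_injective s)

end BrownianBridge

lemma Matrix.uncurry_dotProduct_kronecker_mulVec {R m p : Type*} [CommSemiring R] [Fintype m]
    [Fintype p] (G : Matrix m m R) (A : Matrix p p R) (x : m → p → R) :
    Function.uncurry x ⬝ᵥ (G ⊗ₖ A) *ᵥ Function.uncurry x =
      ∑ j, ∑ k, G j k * (x j ⬝ᵥ A *ᵥ x k) := by
  simp only [dotProduct, mulVec, Fintype.sum_prod_type, kroneckerMap_apply,
    Function.uncurry_apply_pair, Finset.mul_sum]
  refine Finset.sum_congr rfl fun j _ => ?_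
  rw [Finset.sum_comm]
  exact Finset.sum_congr rfl fun k _ => Finset.sum_congr rfl fun α _ =>
    Finset.sum_congr rfl fun β _ => by ring

theorem statement11_general (ν n : ℕ)
    (A₀ : Matrix (Fin ν) (Fin ν) ℝ) (hA₀ : A₀.PosDef)
    (s : Fin n → ℝ) (hmono : StrictMono s)
    (hs : ∀ j, s j ∈ Ioo (0 : ℝ) 1)
    (ξ : Fin n → Fin ν → ℝ) (hξ : ξ ≠ 0) :
    0 < ∑ j, ∑ k,
        min (s j) (s k) * (1 - max (s j) (s k)) * (ξ j ⬝ᵥ A₀.mulVec (ξ k)) := by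
  have hξ' : Function.uncurry ξ ≠ 0 := fun h =>
    hξ (funext fun j => funext fun α => congrFun h (j, α))
  have hpos :=
    ((BrownianBridge.posDef_covariance s hmono hs).kronecker hA₀).dotProduct_mulVec_pos hξ'
  simpa [uncurry_dotProduct_kronecker_mulVec, BrownianBridge.covariance] using hpos

/-- The bilinear form `(μ,μ)₀` built from the kernel `(s ∧ s')(1 − s ∨ s') A₀` is positive
definite on finitely supported vector-valued measures on `(0,1)`. -/
theorem statement11 (ν n : ℕ) (hν : 1 ≤ ν) (hn : 1 ≤ n)
    (A₀ : Matrix (Fin ν) (Fin ν) ℝ) (hA₀ : A₀.PosDef)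
    (s : Fin n → ℝ) (hmono : StrictMono s)
    (hs : ∀ j, s j ∈ Ioo (0 : ℝ) 1)
    (ξ : Fin n → Fin ν → ℝ) (hξ : ξ ≠ 0) :
    0 < ∑ j, ∑ k,
        min (s j) (s k) * (1 - max (s j) (s k)) * (ξ j ⬝ᵥ A₀.mulVec (ξ k)) :=
  statement11_general ν n A₀ hA₀ s hmono hs ξ hξ
end

section
/- Assume the reality condition (R). Then there exists T_e ∈ (0, T̄) such that for every real τ with |τ| < T_e and every s ∈ [0,1], the matrices q̃♭_{iτ}(s) and q̃♯_{iτ}(s) have real entries. -/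
/-!
For purely imaginary `t`, entrywise complex conjugation maps solutions of the boundary value
problem to solutions. Under (R), `A` and `C` are real and `B` is imaginary on the imaginary axis;
differentiating along the axis multiplies by `i`, so `Ȧ` is imaginary and `Ḃ` real there. Hence
`E` changes sign and `F` is fixed under conjugation, which exactly compensates `conj t = -t` in
`t E(ts)` and `t² F(ts)`. The boundary data `0` and `𝟙` are real, so by uniqueness `q̃♭_t` and
`q̃♯_t` coincide with their conjugates.
-/

open Matrix Set MeasureTheory Filter

attribute [local instance] Matrix.linftyOpNormedAddCommGroup Matrix.linftyOpNormedRing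
  Matrix.linftyOpNormedAlgebra

noncomputable section

/-- The reality assumption: each of A, iB, C restricted to the imaginary axis is
real-matrix-valued near 0. -/
def RealityCond {ν : ℕ} (A B C : ℂ → Mat ν) : Prop :=
  ∃ ε > (0 : ℝ), ∀ τ : ℝ, |τ| < ε → ∀ i j : Fin ν,
    (A (Complex.I * τ) i j).im = 0 ∧
    (Complex.I * B (Complex.I * τ) i j).im = 0 ∧
    (C (Complex.I * τ) i j).im = 0

open Topology

section DerivWithinComp

variable {E F : Type*} [NormedAddCommGroup E] [NormedSpace ℝ E] [NormedAddCommGroup F]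
  [NormedSpace ℝ F] (L : E →L[ℝ] F) {q : ℝ → E} {S : Set ℝ}

lemma ContinuousLinearMap.derivWithin_comp_eqOn (hS : UniqueDiffOn ℝ S)
    (hq : DifferentiableOn ℝ q S) :
    EqOn (derivWithin (fun s => L (q s)) S) (fun s => L (derivWithin q S s)) S := fun s hs =>
  (L.hasFDerivAt.comp_hasDerivWithinAt s (hq s hs).hasDerivWithinAt).derivWithin (hS s hs)

lemma ContinuousLinearMap.derivWithin_derivWithin_comp (hS : UniqueDiffOn ℝ S)
    (hq : ContDiffOn ℝ 2 q S) {s : ℝ} (hs : s ∈ S) :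
    derivWithin (derivWithin (fun s => L (q s)) S) S s
      = L (derivWithin (derivWithin q S) S s) := by
  have hq' : DifferentiableOn ℝ (derivWithin q S) S :=
    (hq.derivWithin hS (by norm_num : (1 : WithTop ℕ∞) + 1 ≤ 2)).differentiableOn one_ne_zero
  rw [derivWithin_congr (L.derivWithin_comp_eqOn hS (hq.differentiableOn two_ne_zero))
    (L.derivWithin_comp_eqOn hS (hq.differentiableOn two_ne_zero) hs)]
  exact L.derivWithin_comp_eqOn hS hq' hs

end DerivWithinComp

section MatConj

variable {ν : ℕ}

def matConj : Mat ν →L[ℝ] Mat ν :=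
  LinearMap.toContinuousLinearMap Complex.conjAe.toLinearMap.mapMatrix

@[simp] lemma matConj_apply (M : Mat ν) (i j : Fin ν) :
    matConj M i j = starRingEnd ℂ (M i j) := rfl

lemma matConj_mul (M N : Mat ν) : matConj (M * N) = matConj M * matConj N := by
  ext i j; simp [Matrix.mul_apply]

lemma matConj_smul (z : ℂ) (M : Mat ν) :
    matConj (z • M) = starRingEnd ℂ z • matConj M := by
  ext i j; simp

lemma matConj_one : matConj (1 : Mat ν) = 1 := by
  ext i j; simp [Matrix.one_apply, apply_ite (starRingEnd ℂ)]

lemma matConj_transpose (M : Mat ν) : matConj Mᵀ = (matConj M)ᵀ := by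
  ext i j; simp

lemma matConj_inv (M : Mat ν) : matConj M⁻¹ = (matConj M)⁻¹ := by
  have h (N : Mat ν) : matConj N = Nᴴᵀ := by ext i j; simp
  rw [h, h, Matrix.conjTranspose_nonsing_inv, Matrix.transpose_nonsing_inv]

lemma matConj_eq_self_iff {M : Mat ν} : matConj M = M ↔ ∀ i j, (M i j).im = 0 := by
  simp [← Matrix.ext_iff, Complex.conj_eq_iff_im]

/-- Along the imaginary axis, `d/dx G(ix) = i G'(ix)` and conjugation flips the sign of `i`. -/
lemma matConj_deriv_of_eventually_matConj_eq_smul {G : ℂ → Mat ν} {σ c : ℝ}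
    (hG : DifferentiableAt ℂ G (Complex.I * σ))
    (hsymm : ∀ᶠ x : ℝ in 𝓝 σ, matConj (G (Complex.I * x)) = c • G (Complex.I * x)) :
    matConj (deriv G (Complex.I * σ)) = (-c) • deriv G (Complex.I * σ) := by
  have hline : HasDerivAt (fun x : ℝ => Complex.I * (x : ℂ)) Complex.I σ := by
    simpa using (Complex.ofRealCLM.hasDerivAt (x := σ)).const_mul Complex.I
  have hG' : HasDerivAt (fun x : ℝ => G (Complex.I * x))
      (Complex.I • deriv G (Complex.I * σ)) σ :=
    hG.hasDerivAt.scomp σ hline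
  have hconj : matConj (Complex.I • deriv G (Complex.I * σ))
      = c • Complex.I • deriv G (Complex.I * σ) :=
    (matConj.hasFDerivAt.comp_hasDerivAt σ hG').unique
      ((hG'.const_smul c).congr_of_eventuallyEq hsymm)
  rw [matConj_smul, Complex.conj_I] at hconj
  refine smul_right_injective _ (neg_ne_zero.mpr Complex.I_ne_zero) ?_
  dsimp only
  rw [hconj, smul_comm, neg_smul, neg_smul, smul_neg, neg_neg]

lemma matConj_eq_neg_of_matConj_I_smul {M : Mat ν}
    (h : matConj (Complex.I • M) = Complex.I • M) : matConj M = -M := by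
  rw [matConj_smul, Complex.conj_I] at h
  refine smul_right_injective _ (neg_ne_zero.mpr Complex.I_ne_zero) ?_
  dsimp only
  rw [h, smul_neg, neg_smul, neg_neg]

lemma matConj_Ecoef {A B : ℂ → Mat ν} {z : ℂ} (hA : matConj (A z) = A z)
    (hA' : matConj (deriv A z) = -deriv A z) (hB : matConj (B z) = -B z) :
    matConj (Ecoef A B z) = -Ecoef A B z := by
  rw [Ecoef, map_add, matConj_mul, matConj_smul, matConj_mul, map_sub, matConj_transpose,
    matConj_inv, hA, hA', hB, map_ofNat, transpose_neg, neg_sub_neg, ← neg_sub, mul_neg,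
    smul_neg, neg_mul, neg_add]

lemma matConj_Fcoef {A B C : ℂ → Mat ν} {z : ℂ} (hA : matConj (A z) = A z)
    (hB' : matConj (deriv B z) = deriv B z) (hC : matConj (C z) = C z) :
    matConj (Fcoef A B C z) = Fcoef A B C z := by
  rw [Fcoef, map_sub, matConj_smul, matConj_smul, matConj_mul, matConj_mul, hA, hB', hC,
    map_ofNat, map_ofNat]

lemma SolBVP.matConj_comp {A B C : ℂ → Mat ν} {t : ℂ} {a b : Mat ν} {q : ℝ → Mat ν}
    (hq : SolBVP A B C t a b q) (ht : starRingEnd ℂ t = -t)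
    (hE : ∀ s ∈ Icc (0 : ℝ) 1, matConj (Ecoef A B (t * s)) = -Ecoef A B (t * s))
    (hF : ∀ s ∈ Icc (0 : ℝ) 1, matConj (Fcoef A B C (t * s)) = Fcoef A B C (t * s))
    (ha : matConj a = a) (hb : matConj b = b) :
    SolBVP A B C t a b (fun s => matConj (q s)) := by
  obtain ⟨hsmooth, hode, hq0, hq1⟩ := hq
  have hS : UniqueDiffOn ℝ (Icc (0 : ℝ) 1) := uniqueDiffOn_Icc zero_lt_one
  refine ⟨matConj.contDiff.comp_contDiffOn hsmooth, fun s hs => ?_, by simp only [hq0, ha],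
    by simp only [hq1, hb]⟩
  have ht2 : starRingEnd ℂ (t ^ 2) = t ^ 2 := by rw [map_pow, ht, neg_sq]
  have hd2 : derivWithin (derivWithin (fun s => matConj (q s)) (Icc 0 1)) (Icc 0 1) s
      = matConj (derivWithin (derivWithin q (Icc 0 1)) (Icc 0 1) s) :=
    matConj.derivWithin_derivWithin_comp hS hsmooth hs
  have hd1 : derivWithin (fun s => matConj (q s)) (Icc 0 1) s
      = matConj (derivWithin q (Icc 0 1) s) :=
    matConj.derivWithin_comp_eqOn hS (hsmooth.differentiableOn two_ne_zero) hs
  rw [hd2, hd1, hode s hs, map_add, matConj_smul, matConj_smul, matConj_mul, matConj_mul,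
    hE s hs, hF s hs, ht, ht2, neg_mul, smul_neg, neg_smul, neg_neg]

lemma SolBVP.im_eq_zero_of_unique {A B C : ℂ → Mat ν} {t : ℂ} {a b : Mat ν}
    {q : ℝ → Mat ν} (hq : SolBVP A B C t a b q)
    (huniq : ∀ q' : ℝ → Mat ν, SolBVP A B C t a b q' → EqOn q' q (Icc 0 1))
    (ht : starRingEnd ℂ t = -t)
    (hE : ∀ s ∈ Icc (0 : ℝ) 1, matConj (Ecoef A B (t * s)) = -Ecoef A B (t * s))
    (hF : ∀ s ∈ Icc (0 : ℝ) 1, matConj (Fcoef A B C (t * s)) = Fcoef A B C (t * s))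
    (ha : matConj a = a) (hb : matConj b = b) {s : ℝ} (hs : s ∈ Icc (0 : ℝ) 1) (i j : Fin ν) :
    (q s i j).im = 0 :=
  matConj_eq_self_iff.mp (huniq _ (hq.matConj_comp ht hE hF ha hb) hs) i j

lemma RealityCond.exists_matConj_coef {A B C : ℂ → Mat ν} (hreal : RealityCond A B C)
    (hA : ∀ᶠ z in 𝓝 0, DifferentiableAt ℂ A z) (hB : ∀ᶠ z in 𝓝 0, DifferentiableAt ℂ B z) :
    ∃ r > 0, ∀ x : ℝ, |x| < r →
      matConj (Ecoef A B (Complex.I * x)) = -Ecoef A B (Complex.I * x) ∧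
        matConj (Fcoef A B C (Complex.I * x)) = Fcoef A B C (Complex.I * x) := by
  obtain ⟨ε, hε, hR⟩ := hreal
  have hline : Tendsto (fun x : ℝ => Complex.I * x) (𝓝 0) (𝓝 0) :=
    (continuous_const.mul Complex.continuous_ofReal).tendsto' 0 0 (by simp)
  have hreal_near : ∀ᶠ x : ℝ in 𝓝 0, |x| < ε :=
    Metric.eventually_nhds_iff.mpr ⟨ε, hε, fun x hx => by rwa [Real.dist_0_eq_abs] at hx⟩
  obtain ⟨r, hr, hnear⟩ := Metric.eventually_nhds_iff.mp
    ((hline.eventually hA).and ((hline.eventually hB).and hreal_near))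
  refine ⟨r, hr, fun x hx => ?_⟩
  have hball : ∀ᶠ y : ℝ in 𝓝 x, |y| < r := (isOpen_lt continuous_abs continuous_const).mem_nhds hx
  have hsymm (y : ℝ) (hy : |y| < r) :
      matConj (A (Complex.I * y)) = A (Complex.I * y) ∧
        matConj (B (Complex.I * y)) = -B (Complex.I * y) ∧
        matConj (C (Complex.I * y)) = C (Complex.I * y) := by
    have hy := hnear (show dist y 0 < r by rwa [Real.dist_0_eq_abs])
    refine ⟨?_, matConj_eq_neg_of_matConj_I_smul ?_, ?_⟩ <;>
      refine matConj_eq_self_iff.mpr fun i j => ?_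
    exacts [(hR y hy.2.2 i j).1, (hR y hy.2.2 i j).2.1, (hR y hy.2.2 i j).2.2]
  have hdiff := hnear (show dist x 0 < r by rwa [Real.dist_0_eq_abs])
  have hA' : matConj (deriv A (Complex.I * x)) = -deriv A (Complex.I * x) := by
    simpa using matConj_deriv_of_eventually_matConj_eq_smul (c := 1) hdiff.1
      (hball.mono fun y hy => by rw [(hsymm y hy).1, one_smul])
  have hB' : matConj (deriv B (Complex.I * x)) = deriv B (Complex.I * x) := by
    simpa using matConj_deriv_of_eventually_matConj_eq_smul (c := -1) hdiff.2.1
      (hball.mono fun y hy => by rw [(hsymm y hy).2.1, neg_one_smul])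
  obtain ⟨hAx, hBx, hCx⟩ := hsymm x hx
  exact ⟨matConj_Ecoef hAx hA' hBx, matConj_Fcoef hAx hB' hCx⟩

end MatConj

theorem statement14_general (ν : ℕ) (A B C : ℂ → Mat ν)
    (U : Set ℂ) (hU : U ∈ nhds (0 : ℂ))
    (hA : AnalyticOnNhd ℂ A U) (hB : AnalyticOnNhd ℂ B U)
    (hreal : RealityCond A B C)
    (Tbar : ℝ) (hTbar : 0 < Tbar) (qb qs : ℂ → ℝ → Mat ν)
    (hqb : ∀ t : ℂ, ‖t‖ < Tbar → SolBVP A B C t 0 1 (qb t))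
    (hqbu : ∀ t : ℂ, ‖t‖ < Tbar →
      ∀ q' : ℝ → Mat ν, SolBVP A B C t 0 1 q' → EqOn q' (qb t) (Icc 0 1))
    (hqs : ∀ t : ℂ, ‖t‖ < Tbar → SolBVP A B C t 1 0 (qs t))
    (hqsu : ∀ t : ℂ, ‖t‖ < Tbar →
      ∀ q' : ℝ → Mat ν, SolBVP A B C t 1 0 q' → EqOn q' (qs t) (Icc 0 1)) :
    ∃ Te : ℝ, 0 < Te ∧ Te < Tbar ∧ ∀ τ : ℝ, |τ| < Te → ∀ s ∈ Icc (0 : ℝ) 1,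
      ∀ i j : Fin ν,
        (qb (Complex.I * τ) s i j).im = 0 ∧ (qs (Complex.I * τ) s i j).im = 0 := by
  obtain ⟨r, hr, hcoef⟩ := hreal.exists_matConj_coef
    (eventually_of_mem hU fun z hz => (hA z hz).differentiableAt)
    (eventually_of_mem hU fun z hz => (hB z hz).differentiableAt)
  refine ⟨min Tbar r / 2, by positivity, by linarith [min_le_left Tbar r], fun τ hτ => ?_⟩
  have hτr : |τ| < r := by linarith [min_le_right Tbar r, abs_nonneg τ]
  have hτT : ‖Complex.I * τ‖ < Tbar := by
    rw [norm_mul, Complex.norm_I, Complex.norm_real, Real.norm_eq_abs, one_mul]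
    linarith [min_le_left Tbar r, abs_nonneg τ]
  have ht : starRingEnd ℂ (Complex.I * τ) = -(Complex.I * τ) := by simp
  have hτs (s : ℝ) (hs : s ∈ Icc (0 : ℝ) 1) :
      Complex.I * τ * s = Complex.I * ((τ * s : ℝ) : ℂ) ∧ |τ * s| < r := by
    refine ⟨by push_cast; ring, ?_⟩
    rw [abs_mul, abs_of_nonneg hs.1]
    nlinarith [abs_nonneg τ, hs.2]
  have hE (s : ℝ) (hs : s ∈ Icc (0 : ℝ) 1) : matConj (Ecoef A B (Complex.I * τ * s))
      = -Ecoef A B (Complex.I * τ * s) := by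
    rw [(hτs s hs).1]; exact (hcoef _ (hτs s hs).2).1
  have hF (s : ℝ) (hs : s ∈ Icc (0 : ℝ) 1) : matConj (Fcoef A B C (Complex.I * τ * s))
      = Fcoef A B C (Complex.I * τ * s) := by
    rw [(hτs s hs).1]; exact (hcoef _ (hτs s hs).2).2
  intro s hs i j
  exact ⟨(hqb _ hτT).im_eq_zero_of_unique (hqbu _ hτT) ht hE hF (map_zero _) matConj_one hs i j,
    (hqs _ hτT).im_eq_zero_of_unique (hqsu _ hτT) ht hE hF matConj_one (map_zero _) hs i j⟩

theorem statement14 (ν : ℕ) (hν : 1 ≤ ν) (A B C : ℂ → Mat ν)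
    (U : Set ℂ) (hU : U ∈ nhds (0 : ℂ)) (hUopen : IsOpen U)
    (hA : AnalyticOnNhd ℂ A U) (hB : AnalyticOnNhd ℂ B U) (hC : AnalyticOnNhd ℂ C U)
    (hAsymm : ∀ t ∈ U, (A t).IsSymm) (hCsymm : ∀ t ∈ U, (C t).IsSymm)
    (A₀ : Matrix (Fin ν) (Fin ν) ℝ) (hA₀ : A₀.PosDef)
    (hA0 : A 0 = A₀.map (Complex.ofReal : ℝ → ℂ))
    (hreal : RealityCond A B C)
    (Tbar : ℝ) (hTbar : 0 < Tbar) (qb qs : ℂ → ℝ → Mat ν)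
    (hqb : ∀ t : ℂ, ‖t‖ < Tbar → SolBVP A B C t 0 1 (qb t))
    (hqbu : ∀ t : ℂ, ‖t‖ < Tbar →
      ∀ q' : ℝ → Mat ν, SolBVP A B C t 0 1 q' → EqOn q' (qb t) (Icc 0 1))
    (hqs : ∀ t : ℂ, ‖t‖ < Tbar → SolBVP A B C t 1 0 (qs t))
    (hqsu : ∀ t : ℂ, ‖t‖ < Tbar →
      ∀ q' : ℝ → Mat ν, SolBVP A B C t 1 0 q' → EqOn q' (qs t) (Icc 0 1)) :
    ∃ Te : ℝ, 0 < Te ∧ Te < Tbar ∧ ∀ τ : ℝ, |τ| < Te → ∀ s ∈ Icc (0 : ℝ) 1,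
      ∀ i j : Fin ν,
        (qb (Complex.I * τ) s i j).im = 0 ∧ (qs (Complex.I * τ) s i j).im = 0 :=
  statement14_general ν A B C U hU hA hB hreal Tbar hTbar qb qs hqb hqbu hqs hqsu
end
end

section
/- Assume the reality condition (R). Then there exists T_e ∈ (0, T̄) such that for every real τ with |τ| < T_e and every s, s' ∈ [0,1], the matrix K̃_{iτ}(s,s') has real entries. -/
/-!
On the imaginary axis `t = iσ` the reality condition gives `conj E = -E` and `conj F = F`
(for `Ȧ` and `Ḃ` by differentiating along the axis), while `conj t = -t`. Hence the
entrywise conjugate of `q̃♭_t` solves the same boundary value problem, and uniqueness makes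
`q̃♭_{iσ}` real. The integrand of `K̃_{iτ}` is then real, and so is its integral.
-/

open Matrix Set MeasureTheory Filter

attribute [local instance] Matrix.linftyOpNormedAddCommGroup Matrix.linftyOpNormedRing
  Matrix.linftyOpNormedAlgebra

noncomputable section

/-- The deformation matrix
`K̃_t(s,s') := ∫_{s∨s'}^{1} q̃♭_{tτ}(s/τ) A(tτ) ᵗq̃♭_{tτ}(s'/τ) dτ`. -/
def Ktil {ν : ℕ} (A : ℂ → Mat ν) (qb : ℂ → ℝ → Mat ν) (t : ℂ) (s s' : ℝ) : Mat ν :=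
  ∫ τ in (max s s')..1,
    qb (t * (τ : ℂ)) (s / τ) * A (t * (τ : ℂ)) * (qb (t * (τ : ℂ)) (s' / τ))ᵀ

open scoped ComplexConjugate Topology
open Complex (I conj_I)

section ConjugationSymmetry

variable {ν : ℕ}

def conjMat : Mat ν ≃ₐ[ℝ] Mat ν := Complex.conjAe.mapMatrix

@[simp] lemma conjMat_apply (M : Mat ν) (i j : Fin ν) : conjMat M i j = conj (M i j) := rfl

lemma conjMat_eq_map (M : Mat ν) : conjMat M = M.map conj := rfl

lemma conjMat_smul (c : ℂ) (M : Mat ν) : conjMat (c • M) = conj c • conjMat M := by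
  ext i j; simp

lemma conjMat_transpose (M : Mat ν) : conjMat Mᵀ = (conjMat M)ᵀ := rfl

lemma conjMat_inv (M : Mat ν) : conjMat M⁻¹ = (conjMat M)⁻¹ := by
  have hadj : M.adjugate.map conj = (M.map conj).adjugate := (starRingEnd ℂ).map_adjugate M
  rw [Matrix.inv_def, Matrix.inv_def, conjMat_smul, conjMat_eq_map, conjMat_eq_map, hadj,
    Ring.inverse_eq_inv', map_inv₀, (starRingEnd ℂ).map_det]
  rfl

lemma conjMat_eq_self_iff {M : Mat ν} : conjMat M = M ↔ ∀ i j, (M i j).im = 0 := by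
  simp [← Matrix.ext_iff, Complex.conj_eq_iff_im]

def conjMatCLE : Mat ν ≃L[ℝ] Mat ν := conjMat.toLinearEquiv.toContinuousLinearEquiv

@[simp] lemma conjMatCLE_apply (M : Mat ν) : conjMatCLE M = conjMat M := rfl

lemma derivWithin_conjMat {q : ℝ → Mat ν} {S : Set ℝ} {x : ℝ}
    (hx : UniqueDiffWithinAt ℝ S x) :
    derivWithin (fun s => conjMat (q s)) S x = conjMat (derivWithin q S x) :=
  congrArg (· 1) (conjMatCLE.comp_fderivWithin (f := q) hx)

lemma conjMat_intervalIntegral (f : ℝ → Mat ν) (a b : ℝ) :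
    conjMat (∫ x in a..b, f x) = ∫ x in a..b, conjMat (f x) := by
  simp only [intervalIntegral, ← conjMatCLE_apply, map_sub]
  congr 1 <;> exact (conjMatCLE.integral_comp_comm _).symm

lemma conjMat_eq_neg_of_conjMat_I_smul {M : Mat ν} (h : conjMat (I • M) = I • M) :
    conjMat M = -M := by
  rw [conjMat_smul, conj_I, neg_smul, neg_eq_iff_eq_neg, ← smul_neg] at h
  exact smul_right_injective _ Complex.I_ne_zero h

lemma conjMat_deriv_eq_neg_of_real_on_imaginaryAxis {f : ℂ → Mat ν} {σ : ℝ}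
    (h : ∀ᶠ x : ℝ in 𝓝 σ, conjMat (f (I * x)) = f (I * x)) :
    conjMat (deriv f (I * σ)) = -deriv f (I * σ) := by
  by_cases hf : DifferentiableAt ℂ f (I * σ)
  · have hline : HasDerivAt (fun x : ℝ => I * (x : ℂ)) I σ := by
      simpa using ((hasDerivAt_id σ).ofReal_comp).const_mul I
    have hg : HasDerivAt (fun x : ℝ => f (I * x)) (I • deriv f (I * σ)) σ :=
      hf.hasDerivAt.scomp_of_eq σ hline rfl
    have hconj : HasDerivAt (fun x : ℝ => conjMat (f (I * x)))
        (conjMat (I • deriv f (I * σ))) σ :=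
      conjMatCLE.hasFDerivAt.comp_hasDerivAt σ hg
    have hI := hconj.unique (hg.congr_of_eventuallyEq h)
    exact conjMat_eq_neg_of_conjMat_I_smul hI
  -- Off the differentiability locus `deriv` is the junk value `0`.
  · have h0 : deriv f (I * σ) = 0 := deriv_zero_of_not_differentiableAt hf
    rw [h0, map_zero, neg_zero]

variable {A B C : ℂ → Mat ν} {σ : ℝ}

lemma conjMat_Ecoef (hA : ∀ᶠ x : ℝ in 𝓝 σ, conjMat (A (I * x)) = A (I * x))
    (hB : ∀ᶠ x : ℝ in 𝓝 σ, conjMat (I • B (I * x)) = I • B (I * x)) :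
    conjMat (Ecoef A B (I * σ)) = -Ecoef A B (I * σ) := by
  have hdA := conjMat_deriv_eq_neg_of_real_on_imaginaryAxis hA
  have hBσ := conjMat_eq_neg_of_conjMat_I_smul hB.self_of_nhds
  rw [Ecoef, map_add, map_mul, conjMat_smul, map_mul, map_sub, conjMat_transpose, conjMat_inv,
    hdA, hA.self_of_nhds, hBσ, Matrix.transpose_neg, neg_sub_neg, ← neg_sub, map_ofNat, mul_neg,
    smul_neg, neg_mul, neg_add]

lemma conjMat_Fcoef (hA : ∀ᶠ x : ℝ in 𝓝 σ, conjMat (A (I * x)) = A (I * x))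
    (hB : ∀ᶠ x : ℝ in 𝓝 σ, conjMat (I • B (I * x)) = I • B (I * x))
    (hC : conjMat (C (I * σ)) = C (I * σ)) :
    conjMat (Fcoef A B C (I * σ)) = Fcoef A B C (I * σ) := by
  have hdB : conjMat (deriv B (I * σ)) = deriv B (I * σ) := by
    have h := conjMat_deriv_eq_neg_of_real_on_imaginaryAxis (f := fun z => I • B z) hB
    have hsmul : deriv (fun z => I • B z) (I * σ) = I • deriv B (I * σ) :=
      deriv_fun_const_smul_field I B
    rw [hsmul, conjMat_smul, conj_I, neg_smul, neg_inj] at h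
    exact smul_right_injective _ Complex.I_ne_zero h
  rw [Fcoef, map_sub, conjMat_smul, conjMat_smul, map_mul, map_mul, hA.self_of_nhds, hC, hdB,
    map_ofNat, map_ofNat]

lemma SolBVP.map_conjMat {t : ℂ} {a b : Mat ν} {q : ℝ → Mat ν} (hq : SolBVP A B C t a b q)
    (hE : ∀ s ∈ Icc (0 : ℝ) 1, conjMat (t • Ecoef A B (t * s)) = t • Ecoef A B (t * s))
    (hF : ∀ s ∈ Icc (0 : ℝ) 1,
      conjMat (t ^ 2 • Fcoef A B C (t * s)) = t ^ 2 • Fcoef A B C (t * s)) :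
    SolBVP A B C t (conjMat a) (conjMat b) (fun s => conjMat (q s)) := by
  obtain ⟨hq2, hode, rfl, rfl⟩ := hq
  have hud := uniqueDiffOn_Icc (zero_lt_one' ℝ)
  have hd1 : ∀ s ∈ Icc (0 : ℝ) 1, derivWithin (fun s => conjMat (q s)) (Icc 0 1) s =
      conjMat (derivWithin q (Icc 0 1) s) := fun s hs => derivWithin_conjMat (hud s hs)
  refine ⟨conjMatCLE.contDiff.comp_contDiffOn hq2, fun s hs => ?_, rfl, rfl⟩
  have hd2 : derivWithin (derivWithin (fun s => conjMat (q s)) (Icc 0 1)) (Icc 0 1) s =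
      conjMat (derivWithin (derivWithin q (Icc 0 1)) (Icc 0 1) s) :=
    (derivWithin_congr hd1 (hd1 s hs)).trans (derivWithin_conjMat (hud s hs))
  rw [hd2, hode s hs, hd1 s hs]
  simp only [← smul_mul_assoc, map_add, map_mul, hE s hs, hF s hs]

lemma abs_mul_lt_of_mem_Icc {τ u c : ℝ} (hu : u ∈ Icc (0 : ℝ) 1) (hτ : |τ| < c) :
    |τ * u| < c := by
  rw [abs_mul, abs_of_nonneg hu.1]
  exact (mul_le_of_le_one_right (abs_nonneg τ) hu.2).trans_lt hτ

variable (A B C) in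
def RealityAt (x : ℝ) : Prop :=
  conjMat (A (I * x)) = A (I * x) ∧ conjMat (I • B (I * x)) = I • B (I * x) ∧
    conjMat (C (I * x)) = C (I * x)

lemma RealityCond.exists_realityAt (h : RealityCond A B C) :
    ∃ ε > (0 : ℝ), ∀ x : ℝ, |x| < ε → RealityAt A B C x := by
  obtain ⟨ε, hε, hR⟩ := h
  refine ⟨ε, hε, fun x hx => ⟨?_, ?_, ?_⟩⟩ <;>
    refine conjMat_eq_self_iff.mpr fun i j => ?_
  exacts [(hR x hx i j).1, (hR x hx i j).2.1, (hR x hx i j).2.2]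

lemma conjMat_eqOn_of_solBVP_unique {ε σ : ℝ} (hR : ∀ x : ℝ, |x| < ε → RealityAt A B C x)
    (hσ : |σ| < ε) {q : ℝ → Mat ν} (hq : SolBVP A B C (I * σ) 0 1 q)
    (huniq : ∀ q' : ℝ → Mat ν, SolBVP A B C (I * σ) 0 1 q' → EqOn q' q (Icc 0 1)) :
    EqOn (fun s => conjMat (q s)) q (Icc 0 1) := by
  have hcoef : ∀ s ∈ Icc (0 : ℝ) 1,
      conjMat (Ecoef A B (I * σ * s)) = -Ecoef A B (I * σ * s) ∧
      conjMat (Fcoef A B C (I * σ * s)) = Fcoef A B C (I * σ * s) := by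
    intro s hs
    have hev : ∀ᶠ y in 𝓝 (σ * s), RealityAt A B C y :=
      ((isOpen_lt continuous_abs continuous_const).eventually_mem
        (abs_mul_lt_of_mem_Icc hs hσ)).mono hR
    rw [mul_assoc, ← Complex.ofReal_mul]
    exact ⟨conjMat_Ecoef (hev.mono fun _ h => h.1) (hev.mono fun _ h => h.2.1),
      conjMat_Fcoef (hev.mono fun _ h => h.1) (hev.mono fun _ h => h.2.1) hev.self_of_nhds.2.2⟩
  have hconj : conj (I * σ) = -(I * σ) := by simp
  refine huniq _ ?_
  simpa only [map_zero, map_one] using hq.map_conjMat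
    (fun s hs => by rw [conjMat_smul, (hcoef s hs).1, hconj, neg_smul_neg])
    (fun s hs => by rw [conjMat_smul, (hcoef s hs).2, map_pow, hconj, neg_sq])

lemma conjMat_Ktil {qb : ℂ → ℝ → Mat ν} {t : ℂ}
    (hq : ∀ u ∈ Icc (0 : ℝ) 1,
      EqOn (fun s => conjMat (qb (t * u) s)) (qb (t * u)) (Icc 0 1))
    (hA : ∀ u ∈ Icc (0 : ℝ) 1, conjMat (A (t * u)) = A (t * u))
    {s s' : ℝ} (hs : s ∈ Icc (0 : ℝ) 1) (hs' : s' ∈ Icc (0 : ℝ) 1) :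
    conjMat (Ktil A qb t s s') = Ktil A qb t s s' := by
  rw [Ktil, conjMat_intervalIntegral]
  refine intervalIntegral.integral_congr fun u hu => ?_
  rw [uIcc_of_le (max_le hs.2 hs'.2)] at hu
  have hu01 : u ∈ Icc (0 : ℝ) 1 := ⟨hs.1.trans ((le_max_left _ _).trans hu.1), hu.2⟩
  have hdiv : ∀ r ∈ Icc (0 : ℝ) 1, r ≤ u → r / u ∈ Icc (0 : ℝ) 1 := fun r hr hru =>
    ⟨div_nonneg hr.1 hu01.1, div_le_one_of_le₀ hru hu01.1⟩
  simp only [map_mul, conjMat_transpose, hA u hu01,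
    hq u hu01 (hdiv s hs ((le_max_left _ _).trans hu.1)),
    hq u hu01 (hdiv s' hs' ((le_max_right _ _).trans hu.1))]

end ConjugationSymmetry

theorem statement15_general (ν : ℕ) (A B C : ℂ → Mat ν)
    (hreal : RealityCond A B C)
    (Tbar : ℝ) (hTbar : 0 < Tbar) (qb : ℂ → ℝ → Mat ν)
    (hqb : ∀ t : ℂ, ‖t‖ < Tbar → SolBVP A B C t 0 1 (qb t))
    (hqbu : ∀ t : ℂ, ‖t‖ < Tbar →
      ∀ q' : ℝ → Mat ν, SolBVP A B C t 0 1 q' → EqOn q' (qb t) (Icc 0 1)) :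
    ∃ Te : ℝ, 0 < Te ∧ Te < Tbar ∧ ∀ τ : ℝ, |τ| < Te →
      ∀ s ∈ Icc (0 : ℝ) 1, ∀ s' ∈ Icc (0 : ℝ) 1, ∀ i j : Fin ν,
        (Ktil A qb (Complex.I * τ) s s' i j).im = 0 := by
  obtain ⟨ε, hε, hR⟩ := hreal.exists_realityAt
  refine ⟨min ε Tbar / 2, by positivity, by linarith [min_le_right ε Tbar], ?_⟩
  intro τ hτ s hs s' hs' i j
  have hτ' : |τ| < min ε Tbar := by linarith [lt_min hε hTbar]
  have hsmall : ∀ u ∈ Icc (0 : ℝ) 1,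
      |τ * u| < ε ∧ ‖I * ((τ * u : ℝ) : ℂ)‖ < Tbar := by
    intro u hu
    rw [norm_mul, Complex.norm_I, one_mul, Complex.norm_real, Real.norm_eq_abs]
    exact lt_min_iff.mp (abs_mul_lt_of_mem_Icc hu hτ')
  have hline : ∀ u : ℝ, I * τ * u = I * ((τ * u : ℝ) : ℂ) := fun u => by push_cast; ring
  refine conjMat_eq_self_iff.mp
    (conjMat_Ktil (fun u hu => ?_) (fun u hu => ?_) hs hs') i j
  · rw [hline]
    exact conjMat_eqOn_of_solBVP_unique hR (hsmall u hu).1 (hqb _ (hsmall u hu).2)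
      (hqbu _ (hsmall u hu).2)
  · rw [hline]
    exact (hR _ (hsmall u hu).1).1

theorem statement15 (ν : ℕ) (hν : 1 ≤ ν) (A B C : ℂ → Mat ν)
    (U : Set ℂ) (hU : U ∈ nhds (0 : ℂ)) (hUopen : IsOpen U)
    (hA : AnalyticOnNhd ℂ A U) (hB : AnalyticOnNhd ℂ B U) (hC : AnalyticOnNhd ℂ C U)
    (hAsymm : ∀ t ∈ U, (A t).IsSymm) (hCsymm : ∀ t ∈ U, (C t).IsSymm)
    (A₀ : Matrix (Fin ν) (Fin ν) ℝ) (hA₀ : A₀.PosDef)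
    (hA0 : A 0 = A₀.map (Complex.ofReal : ℝ → ℂ))
    (hreal : RealityCond A B C)
    (Tbar : ℝ) (hTbar : 0 < Tbar) (qb : ℂ → ℝ → Mat ν)
    (hqb : ∀ t : ℂ, ‖t‖ < Tbar → SolBVP A B C t 0 1 (qb t))
    (hqbu : ∀ t : ℂ, ‖t‖ < Tbar →
      ∀ q' : ℝ → Mat ν, SolBVP A B C t 0 1 q' → EqOn q' (qb t) (Icc 0 1)) :
    ∃ Te : ℝ, 0 < Te ∧ Te < Tbar ∧ ∀ τ : ℝ, |τ| < Te →
      ∀ s ∈ Icc (0 : ℝ) 1, ∀ s' ∈ Icc (0 : ℝ) 1, ∀ i j : Fin ν,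
        (Ktil A qb (Complex.I * τ) s s' i j).im = 0 :=
  statement15_general ν A B C hreal Tbar hTbar qb hqb hqbu
end
end

section
/- Let m ≥ 0 be an integer and let Ω₁, Ω₂ be open subsets of ℂ with Ω₁ compactly contained in Ω₂ (i.e. there exists ρ > 0 with Ω₁ + D_ρ ⊆ Ω₂). There exists a constant C > 0, depending only on m, Ω₁, Ω₂, with the following property: for every bounded analytic matrix-valued function θ on Ω₂ and every bounded analytic ℂ-valued function φ on Ω₂, the m-th derivative satisfies ∂_t^m(θ e^{φ}) = α_m e^{φ} on Ω₂ for some analytic matrix-valued function α_m on Ω₂ with sup_{Ω₁} |α_m| ≤ C · (sup_{Ω₂} |θ|) · (1 + (sup_{Ω₂} |φ|)^m). -/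
/-!
Writing `e^{-φ} ∂ (e^{φ} α) = α' + φ' α`, the `m`-th derivative of `θ e^{φ}` is `e^{φ}` times
`(∂ + φ')^m θ`. Each application of `∂ + φ'` costs, by Cauchy's estimate on discs of radius `δ`,
a factor `(1 + sup |φ|) / δ`, at the price of shrinking the domain by `δ`. Taking
`δ = ρ / (m + 1)`, the `m` shrinkings stay inside `Ω₂` around every point of `Ω₁`, and
`(1 + x)^m ≤ 2^(m-1) (1 + x^m)` gives the stated form of the bound.
-/

open Set

attribute [local instance] Matrix.linftyOpNormedAddCommGroup Matrix.linftyOpNormedRing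
  Matrix.linftyOpNormedAlgebra

noncomputable section

open Metric

variable {E : Type*} [NormedAddCommGroup E] [NormedSpace ℂ E]

def twistedIterDeriv (φ : ℂ → ℂ) (θ : ℂ → E) : ℕ → ℂ → E
  | 0 => θ
  | k + 1 => fun z => deriv (twistedIterDeriv φ θ k) z + deriv φ z • twistedIterDeriv φ θ k z

section Analytic

variable [CompleteSpace E] {φ : ℂ → ℂ} {θ : ℂ → E}

theorem AnalyticAt.twistedIterDeriv {z : ℂ} (hθ : AnalyticAt ℂ θ z) (hφ : AnalyticAt ℂ φ z)
    (k : ℕ) : AnalyticAt ℂ (twistedIterDeriv φ θ k) z := by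
  induction k with
  | zero => exact hθ
  | succ k ih => exact ih.deriv.add (hφ.deriv.smul ih)

theorem AnalyticOnNhd.twistedIterDeriv {Ω : Set ℂ} (hθ : AnalyticOnNhd ℂ θ Ω)
    (hφ : AnalyticOnNhd ℂ φ Ω) (k : ℕ) : AnalyticOnNhd ℂ (twistedIterDeriv φ θ k) Ω :=
  fun z hz => (hθ z hz).twistedIterDeriv (hφ z hz) k

theorem iteratedDeriv_cexp_smul_eq {z : ℂ} (hθ : AnalyticAt ℂ θ z) (hφ : AnalyticAt ℂ φ z)
    (k : ℕ) :
    iteratedDeriv k (fun w => Complex.exp (φ w) • θ w) z =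
      Complex.exp (φ z) • twistedIterDeriv φ θ k z := by
  induction k generalizing z with
  | zero => simp [twistedIterDeriv]
  | succ k ih =>
    have hU : IsOpen {w | AnalyticAt ℂ θ w ∧ AnalyticAt ℂ φ w} :=
      (isOpen_analyticAt ℂ θ).inter (isOpen_analyticAt ℂ φ)
    have hev : iteratedDeriv k (fun w => Complex.exp (φ w) • θ w)
        =ᶠ[nhds z] fun w => Complex.exp (φ w) • twistedIterDeriv φ θ k w :=
      Filter.eventually_of_mem (hU.mem_nhds ⟨hθ, hφ⟩) fun w hw => ih hw.1 hw.2
    have hφd := hφ.differentiableAt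
    rw [iteratedDeriv_succ, hev.deriv_eq,
      deriv_fun_smul hφd.cexp (hθ.twistedIterDeriv hφ k).differentiableAt, deriv_cexp hφd,
      twistedIterDeriv, smul_add, smul_smul, mul_comm]

end Analytic

theorem norm_deriv_le_of_closedBall_subset {f : ℂ → E} {Ω : Set ℂ} (hf : AnalyticOnNhd ℂ f Ω)
    {z : ℂ} {R B : ℝ} (hR : 0 < R) (hΩ : closedBall z R ⊆ Ω)
    (hB : ∀ w ∈ sphere z R, ‖f w‖ ≤ B) : ‖deriv f z‖ ≤ B / R :=
  Complex.norm_deriv_le_of_forall_mem_sphere_norm_le hR (hf.differentiableOn.diffContOnCl_ball hΩ) hB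

theorem norm_twistedIterDeriv_le [CompleteSpace E] {φ : ℂ → ℂ} {θ : ℂ → E} {Ω : Set ℂ}
    (hθ : AnalyticOnNhd ℂ θ Ω) (hφ : AnalyticOnNhd ℂ φ Ω) {Mθ Mφ δ : ℝ}
    (hbθ : ∀ z ∈ Ω, ‖θ z‖ ≤ Mθ) (hbφ : ∀ z ∈ Ω, ‖φ z‖ ≤ Mφ) (hδ : 0 < δ) (k : ℕ) {z : ℂ}
    (hz : closedBall z (k * δ) ⊆ Ω) :
    ‖twistedIterDeriv φ θ k z‖ ≤ Mθ * ((1 + Mφ) / δ) ^ k := by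
  induction k generalizing z with
  | zero => simpa [twistedIterDeriv] using hbθ z (hz (mem_closedBall_self (by simp)))
  | succ k ih =>
    have hzΩ : z ∈ Ω := hz (mem_closedBall_self (by positivity))
    have hMθ : 0 ≤ Mθ := (norm_nonneg _).trans (hbθ z hzΩ)
    have hδball : closedBall z δ ⊆ Ω :=
      (closedBall_subset_closedBall (by push_cast; nlinarith [k.cast_nonneg (α := ℝ)])).trans hz
    have hsphere : ∀ w ∈ sphere z δ, closedBall w (k * δ) ⊆ Ω := fun w hw =>
      (closedBall_subset_closedBall' (by rw [mem_sphere.mp hw]; push_cast; linarith)).trans hz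
    set B := Mθ * ((1 + Mφ) / δ) ^ k
    have hα : ‖twistedIterDeriv φ θ k z‖ ≤ B :=
      ih ((closedBall_subset_closedBall (by push_cast; linarith)).trans hz)
    have hdα : ‖deriv (twistedIterDeriv φ θ k) z‖ ≤ B / δ :=
      norm_deriv_le_of_closedBall_subset (hθ.twistedIterDeriv hφ k) hδ hδball
        fun w hw => ih (hsphere w hw)
    have hdφ : ‖deriv φ z‖ ≤ Mφ / δ :=
      norm_deriv_le_of_closedBall_subset hφ hδ hδball
        fun w hw => hbφ w (hδball (sphere_subset_closedBall hw))
    calc ‖twistedIterDeriv φ θ (k + 1) z‖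
        ≤ ‖deriv (twistedIterDeriv φ θ k) z‖ + ‖deriv φ z‖ * ‖twistedIterDeriv φ θ k z‖ :=
          (norm_add_le _ _).trans_eq (by rw [norm_smul])
      _ ≤ B / δ + Mφ / δ * B := by gcongr; exact (norm_nonneg _).trans hdφ
      _ = Mθ * ((1 + Mφ) / δ) ^ (k + 1) := by rw [pow_succ]; ring

theorem statement16_general (ν m : ℕ) (Ω₁ Ω₂ : Set ℂ)
    (ρ : ℝ) (hρ : 0 < ρ)
    (hsub : ∀ z ∈ Ω₁, ∀ w : ℂ, ‖w‖ < ρ → z + w ∈ Ω₂) :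
    ∃ C > (0 : ℝ), ∀ θ : ℂ → Mat ν, ∀ φ : ℂ → ℂ,
      AnalyticOnNhd ℂ θ Ω₂ → AnalyticOnNhd ℂ φ Ω₂ →
      ∀ Mθ Mφ : ℝ,
        (∀ z ∈ Ω₂, ‖θ z‖ ≤ Mθ) → (∀ z ∈ Ω₂, ‖φ z‖ ≤ Mφ) →
        ∃ α : ℂ → Mat ν, AnalyticOnNhd ℂ α Ω₂ ∧
          (∀ z ∈ Ω₂,
            iteratedDeriv m (fun w => Complex.exp (φ w) • θ w) z =
              Complex.exp (φ z) • α z) ∧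
          ∀ z ∈ Ω₁, ‖α z‖ ≤ C * Mθ * (1 + Mφ ^ m) := by
  set δ := ρ / (m + 1)
  have hδ : 0 < δ := by positivity
  refine ⟨2 ^ (m - 1) / δ ^ m, by positivity, fun θ φ hθ hφ Mθ Mφ hbθ hbφ =>
    ⟨twistedIterDeriv φ θ m, hθ.twistedIterDeriv hφ m,
      fun z hz => iteratedDeriv_cexp_smul_eq (hθ z hz) (hφ z hz) m, fun z hz => ?_⟩⟩
  have hball : closedBall z (m * δ) ⊆ Ω₂ := fun w hw => by
    have hmδ : m * δ < ρ := by
      rw [mul_div_assoc', div_lt_iff₀ (by positivity)]; linarith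
    simpa using hsub z hz (w - z) ((mem_closedBall_iff_norm.mp hw).trans_lt hmδ)
  have hzΩ : z ∈ Ω₂ := hball (mem_closedBall_self (by positivity))
  have hMθ : 0 ≤ Mθ := (norm_nonneg _).trans (hbθ z hzΩ)
  have hMφ : 0 ≤ Mφ := (norm_nonneg _).trans (hbφ z hzΩ)
  calc ‖twistedIterDeriv φ θ m z‖ ≤ Mθ * ((1 + Mφ) / δ) ^ m :=
        norm_twistedIterDeriv_le hθ hφ hbθ hbφ hδ m hball
    _ = Mθ * (1 + Mφ) ^ m / δ ^ m := by rw [div_pow, mul_div_assoc]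
    _ ≤ Mθ * (2 ^ (m - 1) * (1 ^ m + Mφ ^ m)) / δ ^ m := by
        gcongr; exact add_pow_le zero_le_one hMφ m
    _ = 2 ^ (m - 1) / δ ^ m * Mθ * (1 + Mφ ^ m) := by rw [one_pow]; ring

/-- Lemma 3.11 of the paper: a Cauchy-type estimate for derivatives of `θ e^φ`. -/
theorem statement16 (ν m : ℕ) (Ω₁ Ω₂ : Set ℂ) (hΩ₂ : IsOpen Ω₂)
    (ρ : ℝ) (hρ : 0 < ρ)
    (hsub : ∀ z ∈ Ω₁, ∀ w : ℂ, ‖w‖ < ρ → z + w ∈ Ω₂) :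
    ∃ C > (0 : ℝ), ∀ θ : ℂ → Mat ν, ∀ φ : ℂ → ℂ,
      AnalyticOnNhd ℂ θ Ω₂ → AnalyticOnNhd ℂ φ Ω₂ →
      ∀ Mθ Mφ : ℝ,
        (∀ z ∈ Ω₂, ‖θ z‖ ≤ Mθ) → (∀ z ∈ Ω₂, ‖φ z‖ ≤ Mφ) →
        ∃ α : ℂ → Mat ν, AnalyticOnNhd ℂ α Ω₂ ∧
          (∀ z ∈ Ω₂,
            iteratedDeriv m (fun w => Complex.exp (φ w) • θ w) z =
              Complex.exp (φ z) • α z) ∧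
          ∀ z ∈ Ω₁, ‖α z‖ ≤ C * Mθ * (1 + Mφ ^ m) :=
  statement16_general ν m Ω₁ Ω₂ ρ hρ hsub
end
end

section
/- Let T_b > 0, let μ* be a positive Borel measure on ℝ^ν, and let f be a measurable matrix-valued function on D_{T_b} × ℝ^ν, analytic in the first variable, such that for every R > 0, ∫_{ℝ^ν} e^{R|ξ|} sup_{|t|<T_b} |f(t,ξ)| dμ*(ξ) < ∞. Let T > 0 and suppose given functions q̃♮ and K̃ such that for all |t| ≤ T with Re t ≥ 0, all n ≥ 1, all 0 < s₁ < ⋯ < s_n < 1, all ξ₁,…,ξ_n ∈ ℝ^ν and all x, y ∈ ℂ^ν: |q̃♮_t(s_j)| ≤ 2(|x| + |y|) and Re( t · Σ_{j,k=1}^n ξ_j · K̃_t(s_j,s_k) ξ_k ) ≥ 0. Then for T_c := (1/2)·min(1, T, T_b), for every t with |t| < T_c, Re t ≥ 0, and every x, y ∈ ℂ^ν, the series p^conj := 𝟙 + Σ_{n≥1} v_n converges absolutely, where v_n(t,x,y) := tⁿ ∫_{0<s₁<⋯<s_n<1} ∫_{ℝ^{νn}} e^{i Σ_j q̃♮_t(s_j)·ξ_j}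 e^{−t Σ_{j,k} ξ_j·K̃_t(s_j,s_k)ξ_k} f(s_n t, ξ_n)⋯f(s₁ t, ξ₁) dμ*(ξ_n)⋯dμ*(ξ₁) dⁿs; indeed the sum of the μ*⊗⋯⊗μ*-integrals of the absolute values of the integrands is bounded by Σ_{n≥1} (A T_c)ⁿ/n! with A := 2∫ e^{2R|ξ|} sup_{|t|<T_b}|f(t,ξ)| dμ*(ξ) whenever |x| + |y| < R. -/
/-!
Since `Re (t Σ ξⱼ·K̃ₜ(sⱼ,sₖ)ξₖ) ≥ 0` and `|q̃♮ₜ| ≤ 2R`, the norm of the integrand of `vₙ` is at most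
`∏ⱼ |t| e^{2R|ξⱼ|} 𝔣(ξⱼ)` once `|sⱼ t| < T_b`, a product of functions of the separate `ξⱼ`.
By Tonelli its `μ*^{⊗n}`-integral is at most `(|t| ∫ e^{2R|ξ|} 𝔣 dμ*)ⁿ`, and the simplex has
volume at most `1/n!`, its `n!` images under permutations of the coordinates being disjoint
subsets of the unit cube. The resulting bounds are the terms of an exponential series.
-/

open Matrix Set MeasureTheory Filter ENNReal NNReal

attribute [local instance] Matrix.linftyOpNormedAddCommGroup Matrix.linftyOpNormedRing
  Matrix.linftyOpNormedAlgebra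

noncomputable section

/-- The open simplex `{0 < s₁ < s₂ < ⋯ < s_n < 1}`. -/
def simplexSet (n : ℕ) : Set (Fin n → ℝ) :=
  {s | StrictMono s ∧ ∀ j, s j ∈ Ioo (0 : ℝ) 1}

/-- `𝔣(ξ) := sup_{|t| < T_b} ‖f(t,ξ)‖`, as an extended nonnegative real. -/
def supf (ν d : ℕ) (Tb : ℝ)
    (f : ℂ → EuclideanSpace ℝ (Fin ν) → Matrix (Fin d) (Fin d) ℂ)
    (ξ : EuclideanSpace ℝ (Fin ν)) : ℝ≥0∞ :=
  ⨆ t : {t : ℂ // ‖t‖ < Tb}, (‖f t.1 ξ‖₊ : ℝ≥0∞)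

/-- The integrand of `v_n`:
`tⁿ e^{i Σ_j q̃♮_t(s_j)·ξ_j} e^{−t Σ_{j,k} ξ_j·K̃_t(s_j,s_k)ξ_k} f(s_n t,ξ_n)⋯f(s₁ t,ξ₁)`. -/
def integrand (ν d : ℕ)
    (f : ℂ → EuclideanSpace ℝ (Fin ν) → Matrix (Fin d) (Fin d) ℂ)
    (qnat : ℂ → EuclideanSpace ℂ (Fin ν) → EuclideanSpace ℂ (Fin ν) → ℝ →
      EuclideanSpace ℂ (Fin ν))
    (Kt : ℂ → ℝ → ℝ → Mat ν)
    (n : ℕ) (t : ℂ) (x y : EuclideanSpace ℂ (Fin ν))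
    (s : Fin n → ℝ) (ξ : Fin n → EuclideanSpace ℝ (Fin ν)) :
    Matrix (Fin d) (Fin d) ℂ :=
  (t ^ n *
      Complex.exp
        ((Complex.I * ∑ j, ∑ i, qnat t x y (s j) i * ((ξ j i : ℝ) : ℂ))
          - t * ∑ j, ∑ k, ∑ a, ∑ b,
              ((ξ j a : ℝ) : ℂ) * Kt t (s j) (s k) a b * ((ξ k b : ℝ) : ℂ))) •
    (List.ofFn fun j : Fin n => f (((s j.rev : ℝ) : ℂ) * t) (ξ j.rev)).prod

open Nat Function

theorem measurePreserving_comp_perm {ι α : Type*} [Fintype ι] [MeasureSpace α]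
    [SigmaFinite (volume : Measure α)] (σ : Equiv.Perm ι) :
    MeasurePreserving (fun s : ι → α => s ∘ σ) volume volume := by
  convert volume_measurePreserving_piCongrLeft (fun _ : ι => α) σ.symm using 1
  ext s j
  simp [MeasurableEquiv.coe_piCongrLeft, Equiv.piCongrLeft_apply_eq_cast]

theorem Equiv.Perm.eq_of_strictMono_comp {n : ℕ} {α : Type*} [LinearOrder α] {s : Fin n → α}
    {σ τ : Equiv.Perm (Fin n)} (hσ : StrictMono (s ∘ σ)) (hτ : StrictMono (s ∘ τ)) : σ = τ := by
  have hs : Injective s := by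
    simpa using hσ.injective.comp σ.symm.injective
  exact Equiv.ext fun j => hs (congrFun (Tuple.unique_monotone hσ.monotone hτ.monotone) j)

theorem measurableSet_simplexSet (n : ℕ) : MeasurableSet (simplexSet n) := by
  simp only [simplexSet, StrictMono, ofPred_and, ofPred_forall]
  measurability

theorem volume_simplexSet_le (n : ℕ) : volume (simplexSet n) ≤ (n ! : ℝ≥0∞)⁻¹ := by
  set S : Equiv.Perm (Fin n) → Set (Fin n → ℝ) := fun σ => (· ∘ σ) ⁻¹' simplexSet n
  have hS_meas (σ) : MeasurableSet (S σ) :=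
    (measurePreserving_comp_perm σ).measurable (measurableSet_simplexSet n)
  have hS_vol (σ) : volume (S σ) = volume (simplexSet n) :=
    (measurePreserving_comp_perm σ).measure_preimage
      (measurableSet_simplexSet n).nullMeasurableSet
  have hS_disj : Pairwise (Disjoint on S) := fun σ τ hne =>
    Set.disjoint_left.2 fun _ hσ hτ => hne (Equiv.Perm.eq_of_strictMono_comp hσ.1 hτ.1)
  have hS_cube : (⋃ σ, S σ) ⊆ univ.pi fun _ => Ioo (0 : ℝ) 1 := by
    simp only [iUnion_subset_iff]
    rintro σ s ⟨-, hs⟩ j -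
    simpa using hs (σ.symm j)
  rw [ENNReal.le_inv_iff_mul_le, mul_comm]
  calc (n ! : ℝ≥0∞) * volume (simplexSet n) = ∑' σ, volume (S σ) := by
        simp [hS_vol, Fintype.card_perm]
    _ = volume (⋃ σ, S σ) := (measure_iUnion hS_disj hS_meas).symm
    _ ≤ volume (univ.pi fun _ : Fin n => Ioo (0 : ℝ) 1) := measure_mono hS_cube
    _ = 1 := by simp [volume_pi_pi, Real.volume_Ioo]

theorem setLIntegral_simplexSet_le {n : ℕ} {F : (Fin n → ℝ) → ℝ≥0∞} {B : ℝ≥0∞}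
    (hF : ∀ s ∈ simplexSet n, F s ≤ B) : ∫⁻ s in simplexSet n, F s ≤ B * (n ! : ℝ≥0∞)⁻¹ := by
  refine (setLIntegral_mono measurable_const hF).trans ?_
  rw [setLIntegral_const]
  gcongr
  exact volume_simplexSet_le n

theorem lintegral_pi_fin_prod_eq_prod {α : Type*} [MeasurableSpace α] (μ : Measure α)
    [SigmaFinite μ] {n : ℕ} {g : Fin n → α → ℝ≥0∞} (hg : ∀ i, Measurable (g i)) :
    ∫⁻ x, ∏ i, g i (x i) ∂(Measure.pi fun _ : Fin n => μ) = ∏ i, ∫⁻ x, g i x ∂μ := by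
  induction n with
  | zero => simp
  | succ n ih =>
    have hmp := (measurePreserving_piFinSuccAbove (fun _ : Fin (n + 1) => μ) 0).symm
    have hmeas : Measurable fun x : Fin (n + 1) → α => ∏ i, g i (x i) :=
      Finset.measurable_prod _ fun i _ => (hg i).comp (measurable_pi_apply i)
    rw [← hmp.lintegral_comp hmeas]
    simp_rw [MeasurableEquiv.piFinSuccAbove_symm_apply, Fin.insertNthEquiv,
      Fin.prod_univ_succ, Fin.insertNth_zero, Equiv.coe_fn_mk]
    simp only [Fin.cons_zero, Fin.cons_succ, cast_eq]
    rw [lintegral_prod_mul (g := fun x : Fin n → α => ∏ i, g i.succ (x i)) (hg 0).aemeasurable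
      (Finset.measurable_prod _ fun i _ => (hg i.succ).comp (measurable_pi_apply i)).aemeasurable,
      ih fun i => hg i.succ]

theorem measurable_enorm_matrix {d : ℕ} {X : Type*} [MeasurableSpace X]
    {F : X → Matrix (Fin d) (Fin d) ℂ} (hF : ∀ i j, Measurable fun x => F x i j) :
    Measurable fun x => ‖F x‖ₑ := by
  have h (x) : ‖F x‖ₑ = ⨆ i, ∑ j, ‖F x i j‖ₑ := by
    rw [enorm_eq_nnnorm, Matrix.linfty_opNNNorm_def, ENNReal.coe_finset_sup,
      ← Finset.sup_univ_eq_iSup]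
    simp only [ENNReal.ofNNReal_finsetSum]
    rfl
  simp_rw [h]
  exact .iSup fun i => Finset.measurable_sum _ fun j _ => (hF i j).enorm

theorem norm_sum_mul_ofReal_le {ν : ℕ} (q : EuclideanSpace ℂ (Fin ν))
    (η : EuclideanSpace ℝ (Fin ν)) : ‖∑ i, q i * (η i : ℂ)‖ ≤ ‖q‖ * ‖η‖ := by
  calc ‖∑ i, q i * (η i : ℂ)‖ ≤ ∑ i, ‖q i‖ * ‖η i‖ := by
        simpa [Complex.norm_real] using norm_sum_le _ fun i => q i * (η i : ℂ)
    _ ≤ √(∑ i, ‖q i‖ ^ 2) * √(∑ i, ‖η i‖ ^ 2) := Real.sum_mul_le_sqrt_mul_sqrt _ _ _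
    _ = ‖q‖ * ‖η‖ := by rw [EuclideanSpace.norm_eq, EuclideanSpace.norm_eq]

theorem norm_prod_ofFn_rev_le {R : Type*} [SeminormedRing R] {n : ℕ} (M : Fin (n + 1) → R) :
    ‖(List.ofFn fun j => M j.rev).prod‖ ≤ ∏ j, ‖M j‖ := by
  refine (List.norm_prod_le' (by simp)).trans (le_of_eq ?_)
  rw [List.map_ofFn, List.prod_ofFn]
  exact Fintype.prod_equiv Fin.revPerm _ _ fun _ => rfl

theorem re_I_mul_sum_sub_le {ν n : ℕ} (q : Fin n → EuclideanSpace ℂ (Fin ν))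
    (ξ : Fin n → EuclideanSpace ℝ (Fin ν)) {C : ℝ} (hq : ∀ j, ‖q j‖ ≤ C) {w : ℂ}
    (hw : 0 ≤ w.re) :
    (Complex.I * ∑ j, ∑ i, q j i * (ξ j i : ℂ) - w).re ≤ ∑ j, C * ‖ξ j‖ := by
  set Q := ∑ j, ∑ i, q j i * (ξ j i : ℂ)
  have hQ : ‖Q‖ ≤ ∑ j, C * ‖ξ j‖ :=
    (norm_sum_le _ _).trans <| Finset.sum_le_sum fun j _ =>
      (norm_sum_mul_ofReal_le _ _).trans (by gcongr; exact hq j)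
  have hre : (Complex.I * Q - w).re = -Q.im - w.re := by simp
  linarith [neg_le_abs Q.im, Complex.abs_im_le_norm Q]

theorem enorm_le_supf {ν d : ℕ} {Tb : ℝ}
    {f : ℂ → EuclideanSpace ℝ (Fin ν) → Matrix (Fin d) (Fin d) ℂ} {u : ℂ} (hu : ‖u‖ < Tb)
    (ξ : EuclideanSpace ℝ (Fin ν)) : ‖f u ξ‖ₑ ≤ supf ν d Tb f ξ :=
  le_iSup_of_le (⟨u, hu⟩ : {u : ℂ // ‖u‖ < Tb}) le_rfl

section Integrand

variable {ν d : ℕ} {f : ℂ → EuclideanSpace ℝ (Fin ν) → Matrix (Fin d) (Fin d) ℂ}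
  {qnat : ℂ → EuclideanSpace ℂ (Fin ν) → EuclideanSpace ℂ (Fin ν) → ℝ →
    EuclideanSpace ℂ (Fin ν)}
  {Kt : ℂ → ℝ → ℝ → Mat ν} {n : ℕ} {t : ℂ} {x y : EuclideanSpace ℂ (Fin ν)}
  {s : Fin (n + 1) → ℝ} {C : ℝ}

theorem norm_integrand_le (hq : ∀ j, ‖qnat t x y (s j)‖ ≤ C)
    {ξ : Fin (n + 1) → EuclideanSpace ℝ (Fin ν)}
    (hK : 0 ≤ (t * ∑ j, ∑ k, ∑ a, ∑ b,
      ((ξ j a : ℝ) : ℂ) * Kt t (s j) (s k) a b * ((ξ k b : ℝ) : ℂ)).re) :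
    ‖integrand ν d f qnat Kt (n + 1) t x y s ξ‖ ≤
      ∏ j, ‖t‖ * Real.exp (C * ‖ξ j‖) * ‖f ((s j : ℂ) * t) (ξ j)‖ := by
  rw [integrand, norm_smul, norm_mul, norm_pow, Complex.norm_exp, Finset.prod_mul_distrib,
    Finset.prod_mul_distrib, Finset.prod_const, Finset.card_fin, ← Real.exp_sum]
  gcongr
  · exact re_I_mul_sum_sub_le (fun j => qnat t x y (s j)) ξ hq hK
  · exact norm_prod_ofFn_rev_le fun j => f ((s j : ℂ) * t) (ξ j)

theorem lintegral_enorm_integrand_le {μ : Measure (EuclideanSpace ℝ (Fin ν))} [SigmaFinite μ]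
    (hf_meas : ∀ i j : Fin d,
      Measurable (fun p : ℂ × EuclideanSpace ℝ (Fin ν) => f p.1 p.2 i j))
    (hq : ∀ j, ‖qnat t x y (s j)‖ ≤ C)
    (hK : ∀ ξ : Fin (n + 1) → EuclideanSpace ℝ (Fin ν), 0 ≤ (t * ∑ j, ∑ k, ∑ a, ∑ b,
      ((ξ j a : ℝ) : ℂ) * Kt t (s j) (s k) a b * ((ξ k b : ℝ) : ℂ)).re)
    {Tb : ℝ} (hs : ∀ j, ‖(s j : ℂ) * t‖ < Tb) :
    ∫⁻ ξ, ‖integrand ν d f qnat Kt (n + 1) t x y s ξ‖ₑ ∂(Measure.pi fun _ => μ) ≤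
      (‖t‖ₑ * ∫⁻ η, ENNReal.ofReal (Real.exp (C * ‖η‖)) * supf ν d Tb f η ∂μ) ^ (n + 1) := by
  set g : Fin (n + 1) → EuclideanSpace ℝ (Fin ν) → ℝ≥0∞ := fun j η =>
    ‖t‖ₑ * ENNReal.ofReal (Real.exp (C * ‖η‖)) * ‖f ((s j : ℂ) * t) η‖ₑ
  have hg_meas (j) : Measurable (g j) :=
    (measurable_const.mul (Real.measurable_exp.comp
      (measurable_const.mul measurable_norm)).ennreal_ofReal).mul
      (measurable_enorm_matrix fun a b => (hf_meas a b).comp measurable_prodMk_left)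
  have hpointwise (ξ) : ‖integrand ν d f qnat Kt (n + 1) t x y s ξ‖ₑ ≤ ∏ j, g j (ξ j) := by
    rw [← ofReal_norm]
    refine (ENNReal.ofReal_le_ofReal (norm_integrand_le hq (hK ξ))).trans (le_of_eq ?_)
    rw [ENNReal.ofReal_prod_of_nonneg fun j _ => by positivity]
    refine Finset.prod_congr rfl fun j _ => ?_
    rw [ENNReal.ofReal_mul (by positivity), ENNReal.ofReal_mul (norm_nonneg _), ofReal_norm,
      ofReal_norm]
  have hfactor (j) : ∫⁻ η, g j η ∂μ ≤
      ‖t‖ₑ * ∫⁻ η, ENNReal.ofReal (Real.exp (C * ‖η‖)) * supf ν d Tb f η ∂μ := by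
    simp only [g, mul_assoc]
    rw [lintegral_const_mul' _ _ enorm_ne_top]
    gcongr with η
    exact enorm_le_supf (hs j) η
  calc ∫⁻ ξ, ‖integrand ν d f qnat Kt (n + 1) t x y s ξ‖ₑ ∂(Measure.pi fun _ => μ)
      ≤ ∫⁻ ξ, ∏ j, g j (ξ j) ∂(Measure.pi fun _ => μ) := lintegral_mono hpointwise
    _ = ∏ j, ∫⁻ η, g j η ∂μ := lintegral_pi_fin_prod_eq_prod μ hg_meas
    _ ≤ _ := by
      simpa using Finset.prod_le_prod' fun j (_ : j ∈ Finset.univ) => hfactor j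

end Integrand

theorem ENNReal.pow_mul_inv_factorial_le {a : ℝ≥0∞} {c : ℝ} (hc : 0 ≤ c)
    (hac : a ≤ ENNReal.ofReal c) (n : ℕ) :
    a ^ n * (n ! : ℝ≥0∞)⁻¹ ≤ ENNReal.ofReal (c ^ n / n !) := by
  rw [div_eq_mul_inv, ENNReal.ofReal_mul (by positivity), ENNReal.ofReal_pow hc,
    ENNReal.ofReal_inv_of_pos (by positivity), ENNReal.ofReal_natCast]
  gcongr

theorem statement19_general (ν d : ℕ) (Tb : ℝ)
    (μstar : Measure (EuclideanSpace ℝ (Fin ν))) [SigmaFinite μstar]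
    (f : ℂ → EuclideanSpace ℝ (Fin ν) → Matrix (Fin d) (Fin d) ℂ)
    (hf_meas : ∀ i j : Fin d,
      Measurable (fun p : ℂ × EuclideanSpace ℝ (Fin ν) => f p.1 p.2 i j))
    (h_int : ∀ R : ℝ, 0 < R →
      (∫⁻ ξ, ENNReal.ofReal (Real.exp (R * ‖ξ‖)) * supf ν d Tb f ξ ∂μstar) < ⊤)
    (T : ℝ)
    (qnat : ℂ → EuclideanSpace ℂ (Fin ν) → EuclideanSpace ℂ (Fin ν) → ℝ →
      EuclideanSpace ℂ (Fin ν))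
    (Kt : ℂ → ℝ → ℝ → Mat ν)
    (hq_bound : ∀ t : ℂ, ‖t‖ ≤ T → 0 ≤ t.re →
      ∀ x y : EuclideanSpace ℂ (Fin ν), ∀ s ∈ Ioo (0 : ℝ) 1,
        ‖qnat t x y s‖ ≤ 2 * (‖x‖ + ‖y‖))
    (hK_pos : ∀ t : ℂ, ‖t‖ ≤ T → 0 ≤ t.re → ∀ n : ℕ, 1 ≤ n →
      ∀ s : Fin n → ℝ, StrictMono s → (∀ j, s j ∈ Ioo (0 : ℝ) 1) →
      ∀ ξ : Fin n → EuclideanSpace ℝ (Fin ν),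
        0 ≤ (t * ∑ j, ∑ k, ∑ a, ∑ b,
            ((ξ j a : ℝ) : ℂ) * Kt t (s j) (s k) a b * ((ξ k b : ℝ) : ℂ)).re) :
    ∀ t : ℂ, ‖t‖ < 1 / 2 * min 1 (min T Tb) → 0 ≤ t.re →
    ∀ R : ℝ, 0 < R → ∀ x y : EuclideanSpace ℂ (Fin ν), ‖x‖ + ‖y‖ < R →
      Summable (fun n : ℕ =>
        ‖∫ s in simplexSet (n + 1),
            (∫ ξ, integrand ν d f qnat Kt (n + 1) t x y s ξ
              ∂(Measure.pi fun _ : Fin (n + 1) => μstar)) ∂volume‖) ∧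
      (∑' n : ℕ, ∫⁻ s in simplexSet (n + 1),
          (∫⁻ ξ, (‖integrand ν d f qnat Kt (n + 1) t x y s ξ‖₊ : ℝ≥0∞)
            ∂(Measure.pi fun _ : Fin (n + 1) => μstar)) ∂volume)
        ≤ ENNReal.ofReal (∑' n : ℕ,
            ((2 * (∫⁻ ξ, ENNReal.ofReal (Real.exp (2 * R * ‖ξ‖)) *
                supf ν d Tb f ξ ∂μstar).toReal) * (1 / 2 * min 1 (min T Tb))) ^ (n + 1)
              / (Nat.factorial (n + 1))) := by
  intro t ht htre R hR x y hxy
  set Tc := 1 / 2 * min 1 (min T Tb) with hTc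
  set A := ∫⁻ ξ, ENNReal.ofReal (Real.exp (2 * R * ‖ξ‖)) * supf ν d Tb f ξ ∂μstar
  set c := 2 * A.toReal * Tc
  have hA : A ≠ ⊤ := (h_int (2 * R) (by positivity)).ne
  have htT : ‖t‖ ≤ T := by
    linarith [norm_nonneg t, min_le_left T Tb, min_le_right 1 (min T Tb)]
  have htTb : ‖t‖ < Tb := by
    linarith [norm_nonneg t, min_le_right T Tb, min_le_right 1 (min T Tb)]
  have hc : 0 ≤ c := mul_nonneg (by positivity) ((norm_nonneg t).trans ht.le)
  have htc : ‖t‖ₑ * A ≤ ENNReal.ofReal c := by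
    rw [← ofReal_norm, ← ENNReal.ofReal_toReal hA, ← ENNReal.ofReal_mul (norm_nonneg t)]
    gcongr
    nlinarith [norm_nonneg t, A.toReal_nonneg]
  have hterm (n : ℕ) : ∫⁻ s in simplexSet (n + 1),
      ∫⁻ ξ, ‖integrand ν d f qnat Kt (n + 1) t x y s ξ‖ₑ ∂(Measure.pi fun _ => μstar) ≤
        ENNReal.ofReal (c ^ (n + 1) / (n + 1)!) := by
    refine (setLIntegral_simplexSet_le fun s ⟨hs_mono, hs_mem⟩ => ?_).trans
      (ENNReal.pow_mul_inv_factorial_le hc htc _)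
    refine lintegral_enorm_integrand_le hf_meas (C := 2 * R)
      (fun j => (hq_bound t htT htre x y _ (hs_mem j)).trans (by linarith))
      (hK_pos t htT htre _ n.succ_pos s hs_mono hs_mem) fun j => ?_
    rw [norm_mul, Complex.norm_real, Real.norm_eq_abs, abs_of_pos (hs_mem j).1]
    nlinarith [(hs_mem j).2, norm_nonneg t]
  have hsum : Summable fun n : ℕ => c ^ (n + 1) / (n + 1)! :=
    (Real.summable_pow_div_factorial c).comp_injective Nat.succ_injective
  refine ⟨hsum.of_norm_bounded fun n => ?_, ?_⟩
  · have h := (enorm_integral_le_lintegral_enorm _).trans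
      ((lintegral_mono fun s => enorm_integral_le_lintegral_enorm _).trans (hterm n))
    rwa [← ofReal_norm, ENNReal.ofReal_le_ofReal_iff (by positivity), ← norm_norm] at h
  · exact (ENNReal.tsum_le_tsum hterm).trans
      (ENNReal.ofReal_tsum_of_nonneg (fun n => by positivity) hsum).ge

/-- Convergence of the deformation series (part -1- of the proof of Theorem 2.1). -/
theorem statement19 (ν d : ℕ) (hν : 1 ≤ ν) (Tb : ℝ) (hTb : 0 < Tb)
    (μstar : Measure (EuclideanSpace ℝ (Fin ν))) [SigmaFinite μstar]
    (f : ℂ → EuclideanSpace ℝ (Fin ν) → Matrix (Fin d) (Fin d) ℂ)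
    (hf_meas : ∀ i j : Fin d,
      Measurable (fun p : ℂ × EuclideanSpace ℝ (Fin ν) => f p.1 p.2 i j))
    (hf_an : ∀ ξ, AnalyticOnNhd ℂ (fun t => f t ξ) (Metric.ball (0 : ℂ) Tb))
    (h_int : ∀ R : ℝ, 0 < R →
      (∫⁻ ξ, ENNReal.ofReal (Real.exp (R * ‖ξ‖)) * supf ν d Tb f ξ ∂μstar) < ⊤)
    (T : ℝ) (hT : 0 < T)
    (qnat : ℂ → EuclideanSpace ℂ (Fin ν) → EuclideanSpace ℂ (Fin ν) → ℝ →
      EuclideanSpace ℂ (Fin ν))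
    (Kt : ℂ → ℝ → ℝ → Mat ν)
    (hq_bound : ∀ t : ℂ, ‖t‖ ≤ T → 0 ≤ t.re →
      ∀ x y : EuclideanSpace ℂ (Fin ν), ∀ s ∈ Ioo (0 : ℝ) 1,
        ‖qnat t x y s‖ ≤ 2 * (‖x‖ + ‖y‖))
    (hK_pos : ∀ t : ℂ, ‖t‖ ≤ T → 0 ≤ t.re → ∀ n : ℕ, 1 ≤ n →
      ∀ s : Fin n → ℝ, StrictMono s → (∀ j, s j ∈ Ioo (0 : ℝ) 1) →
      ∀ ξ : Fin n → EuclideanSpace ℝ (Fin ν),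
        0 ≤ (t * ∑ j, ∑ k, ∑ a, ∑ b,
            ((ξ j a : ℝ) : ℂ) * Kt t (s j) (s k) a b * ((ξ k b : ℝ) : ℂ)).re) :
    ∀ t : ℂ, ‖t‖ < 1 / 2 * min 1 (min T Tb) → 0 ≤ t.re →
    ∀ R : ℝ, 0 < R → ∀ x y : EuclideanSpace ℂ (Fin ν), ‖x‖ + ‖y‖ < R →
      Summable (fun n : ℕ =>
        ‖∫ s in simplexSet (n + 1),
            (∫ ξ, integrand ν d f qnat Kt (n + 1) t x y s ξ
              ∂(Measure.pi fun _ : Fin (n + 1) => μstar)) ∂volume‖) ∧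
      (∑' n : ℕ, ∫⁻ s in simplexSet (n + 1),
          (∫⁻ ξ, (‖integrand ν d f qnat Kt (n + 1) t x y s ξ‖₊ : ℝ≥0∞)
            ∂(Measure.pi fun _ : Fin (n + 1) => μstar)) ∂volume)
        ≤ ENNReal.ofReal (∑' n : ℕ,
            ((2 * (∫⁻ ξ, ENNReal.ofReal (Real.exp (2 * R * ‖ξ‖)) *
                supf ν d Tb f ξ ∂μstar).toReal) * (1 / 2 * min 1 (min T Tb))) ^ (n + 1)
              / (Nat.factorial (n + 1))) :=
  statement19_general ν d Tb μstar f hf_meas h_int T qnat Kt hq_bound hK_pos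
end
end
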